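/- arXiv:1806.01732 — 10 statements merged into one kernel-verified Lean document; each statement's English description precedes it below -/
import Mathlib

section
/- Let A₁, ..., A_n be well-ordered subsets of [0,∞) (with the usual order on ℝ) and let S ⊆ A₁ × ⋯ × A_n. Let M be a linearly ordered abelian group (written multiplicatively) and let m₀,...,m_{n-1} ∈ M with each mᵢ < 1. Then for every g ∈ M, the set {α ∈ S : m₀^{α₀} ⋯ m_{n-1}^{α_{n-1}} = g} is finite, where M is assumed to admit real exponents making it an ordered ℝ-vector space. -/
/-- The class `OrderedSMul` as it stood in the older Mathlib (removed since). -/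
class OrderedSMul (R M : Type*) [Semiring R] [PartialOrder R] [AddCommMonoid M] [PartialOrder M]
    [SMulWithZero R M] : Prop where
  smul_lt_smul_of_pos : ∀ {a b : M} {c : R}, a < b → 0 < c → c • a < c • b
  lt_of_smul_lt_smul_of_pos : ∀ {a b : M} {c : R}, c • a < c • b → 0 < c → a < b

/-!
The set of exponent vectors `α` with `∑ i, α i • m i = g` is an antichain for the componentwise
order: if `α ≤ β` both lie in it, then `∑ i, (β i - α i) • m i = 0` is a sum of nonpositive
terms, so each term vanishes and `α = β` because `m i ≠ 0`. A subset of `A₀ × ⋯ × A_{n-1}` is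
partially well-ordered by Dickson's lemma, and a partially well-ordered antichain is finite.
-/

instance OrderedSMul.toPosSMulStrictMono {R M : Type*} [Semiring R] [PartialOrder R]
    [AddCommMonoid M] [PartialOrder M] [SMulWithZero R M] [OrderedSMul R M] :
    PosSMulStrictMono R M :=
  ⟨fun _ hc _ _ hab => OrderedSMul.smul_lt_smul_of_pos hab hc⟩

theorem isAntichain_setOf_sum_smul_eq {ι 𝕜 M : Type*} [Fintype ι] [Field 𝕜] [PartialOrder 𝕜]
    [IsOrderedRing 𝕜] [AddCommGroup M] [PartialOrder M] [IsOrderedAddMonoid M] [Module 𝕜 M]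
    [PosSMulMono 𝕜 M] {m : ι → M} (hm : ∀ i, m i < 0) (g : M) :
    IsAntichain (· ≤ ·) {α : ι → 𝕜 | ∑ i, α i • m i = g} := by
  intro α (hα : ∑ i, α i • m i = g) β (hβ : ∑ i, β i • m i = g) hne hle
  refine hne (funext fun i => ?_)
  have hsum : ∑ i, (β i - α i) • m i = 0 := by
    simp only [sub_smul, Finset.sum_sub_distrib, hα, hβ, sub_self]
  have hterm := (Finset.sum_eq_zero_iff_of_nonpos fun i _ =>
    smul_nonpos_of_nonneg_of_nonpos (sub_nonneg.2 (hle i)) (hm i).le).1 hsum i (Finset.mem_univ i)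
  exact (sub_eq_zero.1 ((smul_eq_zero.1 hterm).resolve_right (hm i).ne)).symm

theorem stmt1_general {M : Type*} [AddCommGroup M] [LinearOrder M] [IsOrderedAddMonoid M] [Module ℝ M] [OrderedSMul ℝ M]
    (n : ℕ) (A : Fin n → Set ℝ)
    (hwo : ∀ i, (A i).IsWF)
    (S : Set (Fin n → ℝ)) (hS : ∀ α ∈ S, ∀ i, α i ∈ A i)
    (m : Fin n → M) (hsmall : ∀ i, m i < 0) (g : M) :
    {α ∈ S | ∑ i, α i • m i = g}.Finite := by
  have hpwo : {α ∈ S | ∑ i, α i • m i = g}.IsPWO :=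
    (Set.IsPWO.pi fun i => (hwo i).isPWO).mono fun α hα i _ => hS α hα.1 i
  exact ((isAntichain_setOf_sum_smul_eq hsmall g).subset fun _ hα => hα.2)
    |>.finite_of_partiallyWellOrderedOn hpwo

/-- We write the linearly ordered multiplicative group `M`, which carries a compatible
`ℝ`-vector space structure via real exponents, additively: the monomial `m^α`
corresponds to `α • m`, the monomial product `m₀^{α₀} ⋯ m_{n-1}^{α_{n-1}}` to
`∑ i, α i • m i`, and `m` small (`m < 1`) corresponds to `m < 0`.

Given well-ordered sets `A i ⊆ [0,∞)`, a subset `S` of `A₀ × ⋯ × A_{n-1}`, small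
`m₀, …, m_{n-1} ∈ M` and `g ∈ M`, the set of `α ∈ S` with `m^α = g` is finite. -/
theorem stmt1 {M : Type*} [AddCommGroup M] [LinearOrder M] [IsOrderedAddMonoid M] [Module ℝ M] [OrderedSMul ℝ M]
    (n : ℕ) (A : Fin n → Set ℝ) (hA : ∀ i, A i ⊆ Set.Ici (0 : ℝ))
    (hwo : ∀ i, (A i).IsWF)
    (S : Set (Fin n → ℝ)) (hS : ∀ α ∈ S, ∀ i, α i ∈ A i)
    (m : Fin n → M) (hsmall : ∀ i, m i < 0) (g : M) :
    {α ∈ S | ∑ i, α i • m i = g}.Finite :=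
  stmt1_general n A hwo S hS m hsmall g
end

section
/- With M a multiplicatively written linearly ordered ℝ-vector space and m₀,...,m_{n-1} ∈ M small (i.e. mᵢ < 1), let S be a subset of a product of well-ordered subsets of [0,∞)^n. Then the set {m^α : α ∈ S} ⊆ M is reverse well-ordered, i.e. every nonempty subset has a maximum. -/
/-!
With every `m i` small, `α ↦ m^α` is antitone for the pointwise order on exponents, so it maps
partially well-ordered sets to reverse well-ordered ones. By Dickson's lemma a finite product of
well-ordered sets of reals is partially well-ordered, and so is its subset `S`.
-/

lemma antitone_smul_right_of_nonpos {𝕜 β : Type*} [Ring 𝕜] [PartialOrder 𝕜] [IsOrderedRing 𝕜]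
    [AddCommGroup β] [PartialOrder β] [IsOrderedAddMonoid β] [Module 𝕜 β] [PosSMulMono 𝕜 β]
    {b : β} (hb : b ≤ 0) : Antitone fun a : 𝕜 => a • b := fun _ _ h => by
  simpa only [smul_neg, neg_le_neg_iff] using smul_le_smul_of_nonneg_right h (neg_nonneg.2 hb)

lemma antitone_sum_smul_of_nonpos {ι 𝕜 β : Type*} [Fintype ι] [Ring 𝕜] [PartialOrder 𝕜]
    [IsOrderedRing 𝕜] [AddCommGroup β] [PartialOrder β] [IsOrderedAddMonoid β] [Module 𝕜 β]
    [PosSMulMono 𝕜 β] {m : ι → β} (hm : ∀ i, m i ≤ 0) :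
    Antitone fun α : ι → 𝕜 => ∑ i, α i • m i := fun _ _ h =>
  Finset.sum_le_sum fun i _ => antitone_smul_right_of_nonpos (hm i) (h i)

lemma Set.IsPWO.exists_max_of_subset_image_antitone {α β : Type*} [Preorder α] [LinearOrder β]
    {s : Set α} (hs : s.IsPWO) {f : α → β} (hf : Antitone f) {T : Set β} (hT : T ⊆ f '' s)
    (hne : T.Nonempty) : ∃ x ∈ T, ∀ y ∈ T, y ≤ x := by
  have hwf : Set.IsWF (α := βᵒᵈ) T :=
    (hs.image_of_monotone (f := OrderDual.toDual ∘ f) hf.dual_right).isWF.mono hT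
  exact ⟨hwf.min hne, hwf.min_mem hne, fun y hy => hwf.min_le hne hy⟩

/-- `M` is written additively: `m^α` is `∑ i, α i • m i`, and `m i` small means `m i < 0`. -/
theorem stmt2_general {M : Type*} [AddCommGroup M] [LinearOrder M] [IsOrderedAddMonoid M] [Module ℝ M] [PosSMulStrictMono ℝ M]
    (n : ℕ) (A : Fin n → Set ℝ)
    (hwo : ∀ i, (A i).IsWF)
    (S : Set (Fin n → ℝ)) (hS : ∀ α ∈ S, ∀ i, α i ∈ A i)
    (m : Fin n → M) (hsmall : ∀ i, m i < 0) :
    ∀ T ⊆ (fun α : Fin n → ℝ => ∑ i, α i • m i) '' S, T.Nonempty →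
      ∃ x ∈ T, ∀ y ∈ T, y ≤ x := by
  have hS_pwo : S.IsPWO :=
    (Set.IsPWO.pi fun i => (hwo i).isPWO).mono fun α hα => Set.mem_univ_pi.2 (hS α hα)
  exact fun T hT hne => hS_pwo.exists_max_of_subset_image_antitone
    (antitone_sum_smul_of_nonpos fun i => (hsmall i).le) hT hne

/-- As in the paper, the multiplicatively written linearly ordered `ℝ`-vector space `M`
is formalized additively: `m^α` corresponds to `∑ i, α i • m i`, and `m` small (`m < 1`)
corresponds to `m < 0`.

If `S` is contained in a product of well-ordered subsets of `[0,∞)^n` and the `m i` are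
small, then the set `{m^α : α ∈ S}` is reverse well-ordered: every nonempty subset has
a greatest element. -/
theorem stmt2 {M : Type*} [AddCommGroup M] [LinearOrder M] [IsOrderedAddMonoid M] [Module ℝ M] [PosSMulStrictMono ℝ M] [PosSMulReflectLT ℝ M]
    (n : ℕ) (A : Fin n → Set ℝ) (hA : ∀ i, A i ⊆ Set.Ici (0 : ℝ))
    (hwo : ∀ i, (A i).IsWF)
    (S : Set (Fin n → ℝ)) (hS : ∀ α ∈ S, ∀ i, α i ∈ A i)
    (m : Fin n → M) (hsmall : ∀ i, m i < 0) :
    ∀ T ⊆ (fun α : Fin n → ℝ => ∑ i, α i • m i) '' S, T.Nonempty →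
      ∃ x ∈ T, ∀ y ∈ T, y ≤ x :=
  stmt2_general n A hwo S hS m hsmall
end

section
/- Let M be a multiplicatively written linearly ordered ℝ-vector space and let F be an M-generalized power series over a field K with generating monomials m₀ < ⋯ < m_k (all small). Suppose {m₀,...,m_k} has exactly l+1 comparability classes. Then the support of F, as a reverse well-ordered subset of M, has reverse-order type at most ω^{l+1}. -/
/-!
Let `n` be the least (most negative) generator. Every sum `∑ i, α i • m i` lies above some real
multiple `D • n`, while the sums over the generators comparable to `n` have only finitely many
elements above `D • n`, their exponents being bounded by multiples of `D`. So near each of its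
points the set of all sums is covered by finitely many translates of the set built from the other
comparability classes, and induction on the number of classes gives the bound.

A reverse order type at most `ω ^ d` is witnessed by a strictly antitone map into
`Lex (Fin d → ℕ)`, which has order type `ω ^ d`: its coordinatewise addition is the natural sum of
ordinals, strictly monotone in both arguments, and this is what bounds a finite union of translates.
-/

open Set
open scoped Pointwise Finset

section LexTuples

open Ordinal

lemma zero_le_lex_nat {d : ℕ} (x : Lex (Fin d → ℕ)) : 0 ≤ x :=
  Pi.toLex_monotone (β := fun _ => ℕ) fun i => Nat.zero_le (ofLex x i)

lemma toLex_cons_lt_toLex_cons {d a b : ℕ} {v w : Fin d → ℕ} :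
    toLex (Fin.cons a v : Fin (d + 1) → ℕ) < toLex (Fin.cons b w) ↔
      a < b ∨ a = b ∧ toLex v < toLex w :=
  Fin.pi_lex_lt_cons_cons _

noncomputable def lexToOrdinal : (d : ℕ) → Lex (Fin d → ℕ) → Ordinal
  | 0, _ => 0
  | d + 1, v => ω ^ d * ofLex v 0 + lexToOrdinal d (toLex (Fin.tail (ofLex v)))

lemma omega0_pow_mul_add_lt {d a b : ℕ} {x : Ordinal} (hx : x < ω ^ d) (hab : a < b) :
    ω ^ d * a + x < ω ^ d * b :=
  calc ω ^ d * a + x < ω ^ d * a + ω ^ d := add_lt_add_right hx _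
    _ = ω ^ d * (a + 1 : ℕ) := by push_cast; rw [mul_add_one]
    _ ≤ ω ^ d * b := mul_le_mul_right (by exact_mod_cast hab) _

lemma lexToOrdinal_lt : ∀ (d : ℕ) (v : Lex (Fin d → ℕ)), lexToOrdinal d v < ω ^ d
  | 0, _ => by simp [lexToOrdinal]
  | d + 1, v =>
    calc lexToOrdinal (d + 1) v < ω ^ d * (ofLex v 0 + 1 : ℕ) :=
          omega0_pow_mul_add_lt (lexToOrdinal_lt d _) (Nat.lt_succ_self _)
      _ ≤ ω ^ d * ω := mul_le_mul_right (natCast_lt_omega0 _).le _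
      _ = ω ^ (d + 1) := (pow_succ _ _).symm

lemma strictMono_lexToOrdinal : ∀ d, StrictMono (lexToOrdinal d)
  | 0 => fun v w h => absurd h (by simp [Subsingleton.elim v w])
  | d + 1 => fun v w h => by
    rw [← toLex_ofLex v, ← toLex_ofLex w, ← Fin.cons_self_tail (ofLex v),
      ← Fin.cons_self_tail (ofLex w)] at h
    simp only [lexToOrdinal]
    obtain h | ⟨h0, ht⟩ := toLex_cons_lt_toLex_cons.1 h
    · exact (omega0_pow_mul_add_lt (lexToOrdinal_lt d _) h).trans_le le_self_add
    · rw [h0]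
      exact add_lt_add_right (strictMono_lexToOrdinal d ht) _

end LexTuples

lemma StrictAnti.exists_antitone_lt_below {γ W : Type*} [LinearOrder γ] [LinearOrder W]
    [WellFoundedLT W] {X : Set γ} {f : X → W} (hf : StrictAnti f) {T : W} (hT : ∀ x, f x < T) :
    ∃ F : γ → W, Antitone F ∧ ∀ x ∈ X, ∀ z < x, F x < F z := by
  let L : γ → Set W := fun z => insert T (f '' {x | (x : γ) ≤ z})
  have hL : ∀ z, (L z).IsWF := fun z => IsWF.of_wellFoundedLT _
  refine ⟨fun z => (hL z).min (insert_nonempty _ _), fun z z' hzz' => ?_, fun x hx z hzx => ?_⟩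
  · exact IsWF.min_le_min_of_subset
      (insert_subset_insert (image_mono fun x (hx : (x : γ) ≤ z) => hx.trans hzz'))
  · calc (hL x).min (insert_nonempty _ _) ≤ f ⟨x, hx⟩ :=
          (hL x).min_le _ (mem_insert_of_mem _ ⟨⟨x, hx⟩, le_rfl, rfl⟩)
      _ < (hL z).min (insert_nonempty _ _) := by
          obtain h | ⟨y, hyz, hy⟩ := (hL z).min_mem (insert_nonempty _ _)
          · rw [h]; exact hT _
          · rw [← hy]; exact hf (show (y : γ) < x from hyz.trans_lt hzx)

theorem exists_strictAnti_lex_of_subset_add {G : Type*} [AddCommGroup G] [LinearOrder G]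
    [IsOrderedAddMonoid G] {A B X : Set G} (hX : X ⊆ A + B) (hB : B ⊆ Iic 0)
    (hA : ∀ t ∈ X, (A ∩ Ici t).Finite) {d : ℕ} {g : B → Lex (Fin d → ℕ)} (hg : StrictAnti g) :
    ∃ h : X → Lex (Fin (d + 1) → ℕ), StrictAnti h := by
  obtain ⟨F, hF_anti, hF_lt⟩ := StrictAnti.exists_antitone_lt_below
    (f := fun r => toLex (Fin.cons 0 (ofLex (g r)))) (T := toLex (Fin.cons 1 0))
    (fun r r' h => toLex_cons_lt_toLex_cons.2 (Or.inr ⟨rfl, hg h⟩))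
    (fun r => toLex_cons_lt_toLex_cons.2 (Or.inl one_pos))
  -- `F (t - u)` bounds the rank of `t` in the translate `u + B`, and only the finitely many
  -- `u ≥ t` can contribute.
  let I : X → Finset G := fun t => (hA t t.2).toFinset
  refine ⟨fun t => ∑ u ∈ I t, F (t - u), fun t' t htt' => ?_⟩
  obtain ⟨u₀, hu₀, r₀, hr₀, ht⟩ := hX t.2
  have hu₀I : u₀ ∈ I t :=
    (hA t t.2).mem_toFinset.2 ⟨hu₀, ht ▸ add_le_of_nonpos_right (hB hr₀)⟩
  have htt : (t' : G) < t := htt'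
  have hr₀t : r₀ = t - u₀ := eq_sub_of_add_eq' ht
  calc ∑ u ∈ I t, F (t - u) < ∑ u ∈ I t, F (t' - u) :=
        Finset.sum_lt_sum (fun u _ => hF_anti (sub_le_sub_right htt.le u))
          ⟨u₀, hu₀I, by
            rw [← hr₀t]
            exact hF_lt r₀ hr₀ _ (hr₀t ▸ sub_lt_sub_right htt u₀)⟩
    _ ≤ ∑ u ∈ I t', F (t' - u) :=
        Finset.sum_le_sum_of_subset_of_nonneg
          (fun u hu => by
            simp only [I, Finite.mem_toFinset] at hu ⊢
            exact ⟨hu.1, htt.le.trans hu.2⟩)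
          (fun _ _ _ => zero_le_lex_nat _)

lemma finite_add_inter_Ioi {G : Type*} [AddCommMonoid G] [PartialOrder G] [IsOrderedAddMonoid G]
    {A B : Set G} (hA : A ⊆ Iic 0) (hB : B ⊆ Iic 0) {t : G} (hAt : (A ∩ Ioi t).Finite)
    (hBt : (B ∩ Ioi t).Finite) : ((A + B) ∩ Ioi t).Finite := by
  refine (hAt.add hBt).subset ?_
  rintro _ ⟨⟨a, ha, b, hb, rfl⟩, hab⟩
  exact ⟨a, ⟨ha, lt_of_lt_of_le hab (add_le_of_nonpos_right (hB hb))⟩,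
    b, ⟨hb, lt_of_lt_of_le hab (add_le_of_nonpos_left (hA ha))⟩, rfl⟩

lemma smul_image_subset_Iic {G : Type*} [AddCommMonoid G] [PartialOrder G] [Module ℝ G]
    [PosSMulMono ℝ G] {n : G} (hn : n ≤ 0) {S : Set ℝ} (hS : S ⊆ Ici 0) :
    (· • n) '' S ⊆ Iic 0 := by
  rintro _ ⟨a, ha, rfl⟩
  exact smul_nonpos_of_nonneg_of_nonpos (hS ha) hn

section SumsOfMonomials

variable {G : Type*} [AddCommGroup G] [LinearOrder G] [IsOrderedAddMonoid G] [Module ℝ G]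
  [PosSMulStrictMono ℝ G] {ι : Type*}

lemma smul_lt_smul_iff_of_neg_right {a b : ℝ} {n : G} (hn : n < 0) : a • n < b • n ↔ b < a := by
  rw [← neg_lt_neg_iff, ← smul_neg, ← smul_neg, smul_lt_smul_iff_of_pos_right (neg_pos.2 hn)]

variable {m : ι → G} {S : ι → Set ℝ}

lemma sum_smul_image_subset_Iic (hm : ∀ i, m i ≤ 0) (hS : ∀ i, S i ⊆ Ici 0) (s : Finset ι) :
    ∑ i ∈ s, (· • m i) '' S i ⊆ Iic 0 :=
  Finset.sum_induction _ (· ⊆ Iic 0)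
    (fun _ _ hA hB => (add_subset_add hA hB).trans (by simpa using Iic_add_Iic_subset (0 : G) 0))
    (by simp) (fun i _ => smul_image_subset_Iic (hm i) (hS i))

lemma exists_smul_lt_of_mem_sum_smul_image {n : G} (hn : n < 0) (hS : ∀ i, S i ⊆ Ici 0)
    {s : Finset ι} (hnm : ∀ i ∈ s, n ≤ m i) :
    ∀ t ∈ ∑ i ∈ s, (· • m i) '' S i, ∃ D : ℝ, D • n < t := by
  refine Finset.sum_induction _ (fun X => ∀ t ∈ X, ∃ D : ℝ, D • n < t) ?_ ?_ ?_
  · rintro A B hA hB _ ⟨a, ha, b, hb, rfl⟩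
    obtain ⟨D, hD⟩ := hA a ha
    obtain ⟨E, hE⟩ := hB b hb
    exact ⟨D + E, add_smul D E n ▸ add_lt_add hD hE⟩
  · rintro t (rfl : t = 0)
    exact ⟨1, by simpa using hn⟩
  · rintro i hi _ ⟨a, ha, rfl⟩
    exact ⟨a + 1, ((smul_lt_smul_iff_of_neg_right hn).2 (lt_add_one a)).trans_le
      (smul_le_smul_of_nonneg_left (hnm i hi) (hS i ha))⟩

lemma finite_sum_smul_image_inter_Ioi {n : G} (hn : n < 0) (hS : ∀ i, S i ⊆ Ici 0)
    (hSfin : ∀ i a, (S i ∩ Iio a).Finite) {s : Finset ι}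
    (hmn : ∀ i ∈ s, ∃ b : ℝ, 0 < b ∧ m i ≤ b • n) (D : ℝ) :
    ((∑ i ∈ s, (· • m i) '' S i) ∩ Ioi (D • n)).Finite := by
  refine (Finset.sum_induction _ (fun X => X ⊆ Iic 0 ∧ (X ∩ Ioi (D • n)).Finite) ?_ ?_ ?_).2
  · rintro A B ⟨hA, hAfin⟩ ⟨hB, hBfin⟩
    exact ⟨(add_subset_add hA hB).trans (by simpa using Iic_add_Iic_subset (0 : G) 0),
      finite_add_inter_Ioi hA hB hAfin hBfin⟩
  · exact ⟨by simp, finite_zero.subset inter_subset_left⟩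
  · intro i hi
    obtain ⟨b, hb, hmb⟩ := hmn i hi
    refine ⟨smul_image_subset_Iic (hmb.trans (smul_nonpos_of_nonneg_of_nonpos hb.le hn.le)) (hS i),
      ((hSfin i (D / b)).image (· • m i)).subset ?_⟩
    rintro _ ⟨⟨a, ha, rfl⟩, hlt⟩
    refine ⟨a, ⟨ha, (lt_div_iff₀ hb).2 ((smul_lt_smul_iff_of_neg_right hn).1 ?_)⟩, rfl⟩
    calc D • n < a • m i := hlt
      _ ≤ a • b • n := smul_le_smul_of_nonneg_left hmb (hS i ha)
      _ = (a * b) • n := (mul_smul a b n).symm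

theorem exists_strictAnti_lex_sum_smul_image {C : Type*} [DecidableEq C] (hm : ∀ i, m i < 0)
    (κ : ι → C) (hκ : ∀ i j, κ i = κ j → ∃ b : ℝ, 0 < b ∧ m i ≤ b • m j)
    (hS : ∀ i, S i ⊆ Ici 0) (hSfin : ∀ i a, (S i ∩ Iio a).Finite) (s : Finset ι) :
    ∃ f : (∑ i ∈ s, (· • m i) '' S i : Set G) → Lex (Fin #(s.image κ) → ℕ), StrictAnti f := by
  classical
  induction s using Finset.strongInduction with
  | H s ih =>
  obtain rfl | hs := s.eq_empty_or_nonempty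
  · have h0 : ∀ x : (∑ i ∈ ∅, (· • m i) '' S i : Set G), (x : G) = 0 := fun x => by
      simpa using x.2
    exact ⟨fun _ => 0, fun x y hxy => absurd (Subtype.ext ((h0 x).trans (h0 y).symm)) hxy.ne⟩
  obtain ⟨n, hn, hmin⟩ := s.exists_min_image m hs
  obtain ⟨g, hg⟩ := ih (s.filter (κ · ≠ κ n)) (Finset.filter_ssubset.2 ⟨n, hn, by simp⟩)
  have hcard : #(s.image κ) = #((s.filter (κ · ≠ κ n)).image κ) + 1 := by
    rw [← Finset.card_erase_add_one (Finset.mem_image_of_mem κ hn)]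
    congr 2
    ext c
    simp only [Finset.mem_erase, Finset.mem_image, Finset.mem_filter]
    grind
  rw [hcard]
  refine exists_strictAnti_lex_of_subset_add (A := ∑ i ∈ s.filter (κ · = κ n), (· • m i) '' S i)
    (Finset.sum_filter_add_sum_filter_not s (κ · = κ n) _).superset
    (sum_smul_image_subset_Iic (fun i => (hm i).le) hS _) (fun t ht => ?_) hg
  obtain ⟨D, hD⟩ := exists_smul_lt_of_mem_sum_smul_image (hm n) hS hmin t ht
  refine (finite_sum_smul_image_inter_Ioi (hm n) hS hSfin (fun i hi => hκ i n ?_) D).subset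
    fun u hu => ⟨hu.1, hD.trans_le hu.2⟩
  exact (Finset.mem_filter.1 hi).2

end SumsOfMonomials

/-- `M` is written additively: the monomial `m^α` is `∑ i, α i • m i`, and `m` is small when
`m < 0`. -/
theorem stmt4_general {M : Type*} [AddCommGroup M] [LinearOrder M] [IsOrderedAddMonoid M] [Module ℝ M] [PosSMulStrictMono ℝ M]
    {K : Type*} [Field K]
    (k l : ℕ) (m : Fin (k + 1) → M) (hsmall : ∀ i, m i < 0)
    (classes : Fin (k + 1) → Fin (l + 1))
    (hclasses : ∀ i j,
      (∃ a b : ℝ, 0 < a ∧ 0 < b ∧ a • m j < m i ∧ m i < b • m j) ↔ classes i = classes j)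
    (c : (Fin (k + 1) → ℝ) → K)
    (hnn : ∀ α, c α ≠ 0 → ∀ i, 0 ≤ α i)
    (hnatsupp : ∀ i, ∀ a : ℝ, 0 < a → {t : ℝ | t < a ∧ ∃ α, c α ≠ 0 ∧ α i = t}.Finite)
    (F : M → K)
    (hF : ∀ g : M, F g = ∑ᶠ (α : Fin (k + 1) → ℝ) (_ : ∑ i, α i • m i = g), c α) :
    ∃ f : {g : M // F g ≠ 0} → Ordinal,
      (∀ x, f x < Ordinal.omega0 ^ (l + 1 : ℕ)) ∧
      (∀ x y : {g : M // F g ≠ 0}, (y : M) < (x : M) → f x < f y) := by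
  let S : Fin (k + 1) → Set ℝ := fun i => (· i) '' {α | c α ≠ 0}
  have hS : ∀ i, S i ⊆ Ici 0 := by
    rintro i _ ⟨α, hα, rfl⟩
    exact hnn α hα i
  have hSfin : ∀ i a, (S i ∩ Iio a).Finite := fun i a =>
    (hnatsupp i (max a 1) (by positivity)).subset fun _ ⟨ht, hta⟩ =>
      ⟨hta.trans_le (le_max_left a 1), ht⟩
  have hsupp : ∀ g, F g ≠ 0 → g ∈ ∑ i, (· • m i) '' S i := fun g hg => by
    obtain ⟨α, hαg, hα⟩ := exists_ne_zero_of_finsum_mem_ne_zero (hF g ▸ hg)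
    exact (mem_finsetSum _ _ _).2 ⟨fun i => α i • m i, fun {i} _ => ⟨α i, ⟨α, hα, rfl⟩, rfl⟩, hαg⟩
  obtain ⟨f, hf⟩ := exists_strictAnti_lex_sum_smul_image hsmall classes
    (fun i j hij => let ⟨_, b, _, hb, _, hmb⟩ := (hclasses i j).2 hij; ⟨b, hb, hmb.le⟩)
    hS hSfin Finset.univ
  have hd : #(Finset.univ.image classes) ≤ l + 1 :=
    (Finset.card_le_univ _).trans_eq (Fintype.card_fin _)
  refine ⟨fun g => lexToOrdinal _ (f ⟨g, hsupp g g.2⟩), fun g => ?_,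
    fun x y hxy => strictMono_lexToOrdinal _ (hf hxy)⟩
  exact (lexToOrdinal_lt _ _).trans_le (pow_le_pow_right₀ Ordinal.one_lt_omega0.le hd)

/-- The multiplicatively written linearly ordered `ℝ`-vector space `M` is formalized
additively: `m^α` corresponds to `∑ i, α i • m i`, small corresponds to `< 0`, and
comparability of `m, n` means `a • n < m < b • n` for some `a, b > 0`.  The function
`classes` records that `{m₀,…,m_k}` has exactly `l+1` comparability classes.

Conclusion: the support of `F = G(m₀,…,m_k)` has reverse-order type at most `ω^{l+1}`;
formally, there is a map of the support into the ordinals `< ω^{l+1}` that is strictly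
order-reversing (an embedding of the reversed order into `ω^{l+1}`). -/
theorem stmt4 {M : Type*} [AddCommGroup M] [LinearOrder M] [IsOrderedAddMonoid M] [Module ℝ M] [PosSMulStrictMono ℝ M] [PosSMulReflectLT ℝ M]
    {K : Type*} [Field K]
    (k l : ℕ) (m : Fin (k + 1) → M) (hsmall : ∀ i, m i < 0) (hmono : StrictMono m)
    (classes : Fin (k + 1) → Fin (l + 1))
    (hclasses : ∀ i j,
      (∃ a b : ℝ, 0 < a ∧ 0 < b ∧ a • m j < m i ∧ m i < b • m j) ↔ classes i = classes j)
    (hsurj : Function.Surjective classes)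
    (c : (Fin (k + 1) → ℝ) → K)
    (hnn : ∀ α, c α ≠ 0 → ∀ i, 0 ≤ α i)
    (hnatsupp : ∀ i, ∀ a : ℝ, 0 < a → {t : ℝ | t < a ∧ ∃ α, c α ≠ 0 ∧ α i = t}.Finite)
    (F : M → K)
    (hF : ∀ g : M, F g = ∑ᶠ (α : Fin (k + 1) → ℝ) (_ : ∑ i, α i • m i = g), c α) :
    ∃ f : {g : M // F g ≠ 0} → Ordinal,
      (∀ x, f x < Ordinal.omega0 ^ (l + 1 : ℕ)) ∧
      (∀ x y : {g : M // F g ≠ 0}, (y : M) < (x : M) → f x < f y) :=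
  stmt4_general k l m hsmall classes hclasses c hnn hnatsupp F hF
end

section
/- Let M be a multiplicatively written linearly ordered ℝ-vector space and K a commutative ring. The set of M-generalized Laurent series over K, i.e. series of the form n·G(m₀,...,m_k) with G a generalized power series over K with natural support, m₀,...,m_k ∈ M small, and n in the multiplicative ℝ-subspace generated by m₀,...,m_k, is a subring of the Hahn series ring K[[M]]; it is closed under both addition and multiplication. -/
/-- Coefficient function of a generalized power series over `K` with natural support
contained in `[0,∞)^{k+1}`. -/
def IsNaturalGPS {K : Type*} [CommRing K] {k : ℕ} (c : (Fin (k + 1) → ℝ) → K) : Prop :=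
  (∀ α, c α ≠ 0 → ∀ i, 0 ≤ α i) ∧
  ∀ i, ∀ a : ℝ, 0 < a → {t : ℝ | t < a ∧ ∃ α, c α ≠ 0 ∧ α i = t}.Finite

/-- The multiplicatively written linearly ordered `ℝ`-vector space `M` is formalized
additively (monomial products become sums, small `< 1` becomes `< 0`).  `F` is an
`M`-generalized Laurent series over `K`: `F = n · G(m₀,…,m_k)` with `G` a generalized
power series over `K` with natural support, `m₀,…,m_k ∈ M` small, and `n = m^β` in the
multiplicative `ℝ`-subspace generated by the `m i`. -/
def IsMGenLaurent {M K : Type*} [AddCommGroup M] [LinearOrder M] [IsOrderedAddMonoid M] [Module ℝ M] [CommRing K]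
    (F : M → K) : Prop :=
  ∃ (k : ℕ) (m : Fin (k + 1) → M) (β : Fin (k + 1) → ℝ) (c : (Fin (k + 1) → ℝ) → K),
    (∀ i, m i < 0) ∧ IsNaturalGPS c ∧
    ∀ g : M, F g = ∑ᶠ (α : Fin (k + 1) → ℝ) (_ : ∑ i, (β i + α i) • m i = g), c α

/-!
Write `d(m) = ∑_γ d_γ m^γ`, with `m^γ = ∑ i, γ i • m i` additively, for coefficients `d` on
exponent vectors `γ ∈ ℝ^ι` such that in each coordinate only finitely many exponents of the
support lie below any bound. The monomial factor `m^β` of a Laurent series is absorbed by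
translating exponents, so exponents need only be bounded below, not nonnegative. Such a support is
partially well ordered, and since every `m i < 0` the map `γ ↦ m^γ` is strictly antitone; its
fibres on the support are therefore antichains, hence finite. So `d(m)` is well defined and every
convolution sum is finite. After concatenating the generators of two series, their product is the
evaluation of `d₁(x) d₂(y)` in the disjoint variables `(x, y)`, and their sum that of
`d₁(x) · 1 + 1 · d₂(y)`.
-/

open Set Function

theorem Set.IsPWO.finite_inter_fiber_of_strictAnti {α β : Type*} [PartialOrder α] [Preorder β]
    {s : Set α} (hs : s.IsPWO) {f : α → β} (hf : StrictAnti f) (b : β) :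
    ({x | f x = b} ∩ s).Finite := by
  refine IsAntichain.finite_of_partiallyWellOrderedOn ?_ (hs.mono inter_subset_right)
  intro x hx y hy hne hle
  exact (hf (hle.lt_of_ne hne)).ne (hy.1.trans hx.1.symm)

theorem Set.isPWO_of_finite_inter_Iio {α : Type*} [LinearOrder α] {s : Set α}
    (h : ∀ a, (s ∩ Iio a).Finite) : s.IsPWO := by
  refine IsWF.isPWO (isWF_iff_no_descending_seq.2 fun f hf hfs => ?_)
  refine infinite_range_of_injective (hf.injective.comp Nat.succ_injective) ((h (f 0)).subset ?_)
  rintro _ ⟨n, rfl⟩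
  exact ⟨hfs _, hf n.succ_pos⟩

theorem finsum_mul_finsum_fiber {A B M K : Type*} [AddCommGroup M] [NonUnitalNonAssocSemiring K]
    {f₁ : A → M} {f₂ : B → M} {u : A → K} {v : B → K} {g : M}
    (hu : ∀ q, ({a | f₁ a = q} ∩ support u).Finite)
    (hv : ∀ q, ({b | f₂ b = q} ∩ support v).Finite)
    (huv : ({p : A × B | f₁ p.1 + f₂ p.2 = g} ∩ support u ×ˢ support v).Finite) :
    ∑ᶠ q, (∑ᶠ a ∈ {a | f₁ a = q}, u a) * (∑ᶠ b ∈ {b | f₂ b = g - q}, v b) =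
      ∑ᶠ p ∈ {p : A × B | f₁ p.1 + f₂ p.2 = g}, u p.1 * v p.2 := by
  classical
  set S := huv.toFinset
  have hfiber (q : M) : (∑ᶠ a ∈ {a | f₁ a = q}, u a) * (∑ᶠ b ∈ {b | f₂ b = g - q}, v b) =
      ∑ p ∈ S with f₁ p.1 = q, u p.1 * v p.2 := by
    rw [finsum_mem_eq_sum u (hu q), finsum_mem_eq_sum v (hv (g - q)), Finset.sum_mul_sum,
      ← Finset.sum_product']
    refine Finset.sum_congr (Finset.ext fun p => ?_) fun _ _ => rfl
    simp only [S, Finset.mem_product, Finset.mem_filter, Finite.mem_toFinset, mem_inter_iff,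
      mem_prod, mem_support, eq_sub_iff_add_eq']
    grind
  have hsupp : support (fun q => ∑ p ∈ S with f₁ p.1 = q, u p.1 * v p.2) ⊆
      ↑(S.image fun p => f₁ p.1) := fun q hq => by
    obtain ⟨p, hp, -⟩ := Finset.exists_ne_zero_of_sum_ne_zero hq
    rw [Finset.mem_filter] at hp
    exact Finset.mem_image.2 ⟨p, hp.1, hp.2⟩
  rw [finsum_congr hfiber, finsum_eq_sum_of_support_subset _ hsupp,
    Finset.sum_fiberwise_of_maps_to fun p hp =>
      Finset.mem_image_of_mem (fun p : A × B => f₁ p.1) hp]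
  refine (finsum_mem_eq_sum_of_inter_support_eq _ ?_).symm
  ext p
  simp only [S, Finite.coe_toFinset, mem_inter_iff, mem_prod, mem_support]
  exact ⟨fun ⟨h, hp⟩ => ⟨⟨h, left_ne_zero_of_mul hp, right_ne_zero_of_mul hp⟩, hp⟩,
    fun ⟨⟨h, _⟩, hp⟩ => ⟨h, hp⟩⟩

def HasLocallyFiniteExponents {ι K : Type*} [Zero K] (d : (ι → ℝ) → K) : Prop :=
  ∀ i a, (eval i '' support d ∩ Iio a).Finite

namespace HasLocallyFiniteExponents

variable {ι K : Type*}

section Zero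

variable [Zero K] {d : (ι → ℝ) → K}

theorem bddBelow (hd : HasLocallyFiniteExponents d) (i : ι) : BddBelow (eval i '' support d) :=
  ((hd i 0).bddBelow.union bddBelow_Ici).mono fun t ht => (lt_or_ge t 0).imp (⟨ht, ·⟩) id

theorem isPWO_support [Finite ι] (hd : HasLocallyFiniteExponents d) : (support d).IsPWO :=
  (IsPWO.pi fun i => isPWO_of_finite_inter_Iio (hd i)).mono fun γ hγ _ _ => ⟨γ, hγ, rfl⟩

theorem comp_add_left (hd : HasLocallyFiniteExponents d) (β : ι → ℝ) :
    HasLocallyFiniteExponents fun γ => d (β + γ) := by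
  intro i a
  refine ((hd i (β i + a)).image (· - β i)).subset ?_
  rintro t ⟨⟨γ, hγ, rfl⟩, ht⟩
  exact ⟨β i + γ i, ⟨⟨β + γ, hγ, rfl⟩, by simpa using ht⟩, by simp⟩

theorem single [DecidableEq (ι → ℝ)] (c : K) :
    HasLocallyFiniteExponents (Pi.single (0 : ι → ℝ) c) := by
  intro i _
  refine (finite_singleton 0).subset ?_
  rintro t ⟨⟨γ, hγ, rfl⟩, -⟩
  obtain rfl : γ = 0 := by_contra fun h => hγ (Pi.single_eq_of_ne h _)
  rfl

end Zero

theorem add [AddZeroClass K] {d₁ d₂ : (ι → ℝ) → K} (hd₁ : HasLocallyFiniteExponents d₁)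
    (hd₂ : HasLocallyFiniteExponents d₂) : HasLocallyFiniteExponents (d₁ + d₂) := by
  intro i a
  refine ((hd₁ i a).union (hd₂ i a)).subset ?_
  rintro t ⟨⟨γ, hγ, rfl⟩, ht⟩
  rcases support_add d₁ d₂ hγ with h | h
  exacts [Or.inl ⟨⟨γ, h, rfl⟩, ht⟩, Or.inr ⟨⟨γ, h, rfl⟩, ht⟩]

end HasLocallyFiniteExponents

def tensorSeries {K : Type*} [Mul K] {a b : ℕ} (d₁ : (Fin a → ℝ) → K) (d₂ : (Fin b → ℝ) → K) :
    (Fin (a + b) → ℝ) → K :=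
  fun γ => d₁ (fun i => γ (Fin.castAdd b i)) * d₂ (fun j => γ (Fin.natAdd a j))

@[simp]
theorem tensorSeries_append {K : Type*} [Mul K] {a b : ℕ} (d₁ : (Fin a → ℝ) → K)
    (d₂ : (Fin b → ℝ) → K) (γ₁ : Fin a → ℝ) (γ₂ : Fin b → ℝ) :
    tensorSeries d₁ d₂ (Fin.append γ₁ γ₂) = d₁ γ₁ * d₂ γ₂ := by
  simp [tensorSeries]

theorem HasLocallyFiniteExponents.tensor {K : Type*} [MulZeroClass K] {a b : ℕ}
    {d₁ : (Fin a → ℝ) → K} {d₂ : (Fin b → ℝ) → K} (hd₁ : HasLocallyFiniteExponents d₁)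
    (hd₂ : HasLocallyFiniteExponents d₂) : HasLocallyFiniteExponents (tensorSeries d₁ d₂) := by
  intro i t
  refine Fin.addCases (fun i => ?_) (fun j => ?_) i
  · refine (hd₁ i t).subset ?_
    rintro _ ⟨⟨γ, hγ, rfl⟩, ht⟩
    exact ⟨⟨_, left_ne_zero_of_mul hγ, rfl⟩, ht⟩
  · refine (hd₂ j t).subset ?_
    rintro _ ⟨⟨γ, hγ, rfl⟩, ht⟩
    exact ⟨⟨_, right_ne_zero_of_mul hγ, rfl⟩, ht⟩

theorem Fin.sum_append_smul_append {M : Type*} [AddCommMonoid M] [Module ℝ M] {a b : ℕ}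
    (γ₁ : Fin a → ℝ) (γ₂ : Fin b → ℝ) (m₁ : Fin a → M) (m₂ : Fin b → M) :
    ∑ i, Fin.append γ₁ γ₂ i • Fin.append m₁ m₂ i = ∑ i, γ₁ i • m₁ i + ∑ j, γ₂ j • m₂ j := by
  simp [Fin.sum_univ_add]

section Evaluation

variable {ι M K : Type*} [Fintype ι] [AddCommGroup M] [Module ℝ M]

-- `finsum` gives the junk value `0` at `g` when the fibre over `g` meets `support d` in an
-- infinite set; `HasLocallyFiniteExponents.finite_fiber` rules this out.
noncomputable def evalSeries [AddCommMonoid K] (m : ι → M) (d : (ι → ℝ) → K) : M → K :=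
  fun g => ∑ᶠ γ ∈ {γ : ι → ℝ | ∑ i, γ i • m i = g}, d γ

theorem evalSeries_add [AddCommMonoid K] {m : ι → M} {d₁ d₂ : (ι → ℝ) → K}
    (h₁ : ∀ g, ({γ | ∑ i, γ i • m i = g} ∩ support d₁).Finite)
    (h₂ : ∀ g, ({γ | ∑ i, γ i • m i = g} ∩ support d₂).Finite) :
    evalSeries m (d₁ + d₂) = evalSeries m d₁ + evalSeries m d₂ :=
  funext fun g => finsum_mem_add_distrib' (h₁ g) (h₂ g)

theorem evalSeries_single [AddCommMonoid K] [DecidableEq (ι → ℝ)] [DecidableEq M] (m : ι → M)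
    (c : K) : evalSeries m (Pi.single 0 c) = Pi.single 0 c := by
  funext g
  rw [evalSeries, finsum_eq_single _ 0 fun γ hγ => by simp [Pi.single_eq_of_ne hγ]]
  by_cases hg : g = 0 <;> simp [hg, eq_comm]

theorem finsum_comp_add_left_eq_evalSeries [AddCommMonoid K] (m : ι → M) (d : (ι → ℝ) → K)
    (β : ι → ℝ) (g : M) :
    ∑ᶠ (α : ι → ℝ) (_ : ∑ i, (β i + α i) • m i = g), d (β + α) = evalSeries m d g :=
  finsum_comp_equiv (Equiv.addLeft β) (f := fun γ => ∑ᶠ (_ : ∑ i, γ i • m i = g), d γ)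

theorem exists_ne_zero_of_evalSeries_ne_zero [AddCommMonoid K] {m : ι → M}
    {d : (ι → ℝ) → K} {g : M} (h : evalSeries m d g ≠ 0) :
    ∃ γ, ∑ i, γ i • m i = g ∧ d γ ≠ 0 :=
  exists_ne_zero_of_finsum_mem_ne_zero h

end Evaluation

section Ordered

variable {M K : Type*} [AddCommGroup M] [LinearOrder M] [IsOrderedAddMonoid M] [Module ℝ M]
  [PosSMulStrictMono ℝ M]

theorem strictAnti_smul_right_of_neg {m : M} (hm : m < 0) : StrictAnti fun t : ℝ => t • m :=
  fun s t hst => by simpa [sub_smul] using smul_neg_of_pos_of_neg (sub_pos.2 hst) hm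

theorem strictAnti_sum_smul {ι : Type*} [Fintype ι] {m : ι → M} (hm : ∀ i, m i < 0) :
    StrictAnti fun γ : ι → ℝ => ∑ i, γ i • m i := by
  intro γ γ' h
  obtain ⟨hle, i, hlt⟩ := Pi.lt_def.1 h
  exact Finset.sum_lt_sum (fun i _ => (strictAnti_smul_right_of_neg (hm i)).antitone (hle i))
    ⟨i, Finset.mem_univ i, strictAnti_smul_right_of_neg (hm i) hlt⟩

namespace HasLocallyFiniteExponents

variable [Zero K] {ι₁ ι₂ : Type*} [Fintype ι₁] [Fintype ι₂]

theorem finite_fiber {m : ι₁ → M} (hm : ∀ i, m i < 0) {d : (ι₁ → ℝ) → K}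
    (hd : HasLocallyFiniteExponents d) (g : M) :
    ({γ | ∑ i, γ i • m i = g} ∩ support d).Finite :=
  hd.isPWO_support.finite_inter_fiber_of_strictAnti (strictAnti_sum_smul hm) g

theorem finite_pairs {m₁ : ι₁ → M} {m₂ : ι₂ → M} (hm₁ : ∀ i, m₁ i < 0) (hm₂ : ∀ j, m₂ j < 0)
    {d₁ : (ι₁ → ℝ) → K} {d₂ : (ι₂ → ℝ) → K} (hd₁ : HasLocallyFiniteExponents d₁)
    (hd₂ : HasLocallyFiniteExponents d₂) (g : M) :
    ({p : (ι₁ → ℝ) × (ι₂ → ℝ) | ∑ i, p.1 i • m₁ i + ∑ j, p.2 j • m₂ j = g} ∩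
      support d₁ ×ˢ support d₂).Finite := by
  refine (hd₁.isPWO_support.prod hd₂.isPWO_support).finite_inter_fiber_of_strictAnti ?_ g
  rintro p p' h
  rcases Prod.lt_iff.1 h with ⟨h₁, h₂⟩ | ⟨h₁, h₂⟩
  · exact add_lt_add_of_lt_of_le (strictAnti_sum_smul hm₁ h₁)
      ((strictAnti_sum_smul hm₂).antitone h₂)
  · exact add_lt_add_of_le_of_lt ((strictAnti_sum_smul hm₁).antitone h₁)
      (strictAnti_sum_smul hm₂ h₂)

end HasLocallyFiniteExponents

variable {a b : ℕ} {m₁ : Fin a → M} {m₂ : Fin b → M} {d₁ : (Fin a → ℝ) → K}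
  {d₂ : (Fin b → ℝ) → K}

theorem finsum_evalSeries_mul_evalSeries [NonUnitalNonAssocSemiring K] (hm₁ : ∀ i, m₁ i < 0)
    (hm₂ : ∀ j, m₂ j < 0) (hd₁ : HasLocallyFiniteExponents d₁)
    (hd₂ : HasLocallyFiniteExponents d₂) (g : M) :
    ∑ᶠ q, evalSeries m₁ d₁ q * evalSeries m₂ d₂ (g - q) =
      evalSeries (Fin.append m₁ m₂) (tensorSeries d₁ d₂) g := by
  rw [evalSeries, ← finsum_comp_equiv (Fin.appendEquiv a b)]
  refine (finsum_mul_finsum_fiber (hd₁.finite_fiber hm₁) (hd₂.finite_fiber hm₂)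
    (hd₁.finite_pairs hm₁ hm₂ hd₂ g)).trans (finsum_congr fun p => ?_)
  simp only [mem_ofPred_eq, Fin.appendEquiv_apply, Fin.sum_append_smul_append]
  exact finsum_congr fun _ => (tensorSeries_append d₁ d₂ p.1 p.2).symm

theorem finite_antidiagonal_evalSeries [AddCommMonoid K] (hm₁ : ∀ i, m₁ i < 0)
    (hm₂ : ∀ j, m₂ j < 0) (hd₁ : HasLocallyFiniteExponents d₁)
    (hd₂ : HasLocallyFiniteExponents d₂) (g : M) :
    {q | evalSeries m₁ d₁ q ≠ 0 ∧ evalSeries m₂ d₂ (g - q) ≠ 0}.Finite := by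
  refine ((hd₁.finite_pairs hm₁ hm₂ hd₂ g).image fun p => ∑ i, p.1 i • m₁ i).subset ?_
  rintro q ⟨hq₁, hq₂⟩
  obtain ⟨γ₁, rfl, h₁⟩ := exists_ne_zero_of_evalSeries_ne_zero hq₁
  obtain ⟨γ₂, h, h₂⟩ := exists_ne_zero_of_evalSeries_ne_zero hq₂
  exact ⟨(γ₁, γ₂), ⟨add_eq_of_eq_sub' h, h₁, h₂⟩, rfl⟩

theorem evalSeries_add_evalSeries [NonAssocSemiring K] (hm₁ : ∀ i, m₁ i < 0)
    (hm₂ : ∀ j, m₂ j < 0) (hd₁ : HasLocallyFiniteExponents d₁)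
    (hd₂ : HasLocallyFiniteExponents d₂) :
    evalSeries m₁ d₁ + evalSeries m₂ d₂ = evalSeries (Fin.append m₁ m₂)
      (tensorSeries d₁ (Pi.single 0 1) + tensorSeries (Pi.single 0 1) d₂) := by
  have hm : ∀ i, Fin.append m₁ m₂ i < 0 := Fin.addCases (by simpa using hm₁) (by simpa using hm₂)
  have hF (g : M) : evalSeries m₁ d₁ g =
      evalSeries (Fin.append m₁ m₂) (tensorSeries d₁ (Pi.single 0 1)) g := by
    rw [← finsum_evalSeries_mul_evalSeries hm₁ hm₂ hd₁ (.single 1), evalSeries_single,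
      finsum_eq_single _ g fun q hq => by simp [sub_eq_zero, Ne.symm hq]]
    simp
  have hG (g : M) : evalSeries m₂ d₂ g =
      evalSeries (Fin.append m₁ m₂) (tensorSeries (Pi.single 0 1) d₂) g := by
    rw [← finsum_evalSeries_mul_evalSeries hm₁ hm₂ (.single 1) hd₂, evalSeries_single,
      finsum_eq_single _ 0 fun q hq => by simp [hq]]
    simp
  rw [funext hF, funext hG, evalSeries_add ((hd₁.tensor (.single 1)).finite_fiber hm)
    (((HasLocallyFiniteExponents.single 1).tensor hd₂).finite_fiber hm)]

end Ordered

section Laurent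

variable {M K : Type*} [AddCommGroup M] [LinearOrder M] [IsOrderedAddMonoid M] [Module ℝ M]
  [CommRing K]

theorem IsNaturalGPS.hasLocallyFiniteExponents {k : ℕ} {c : (Fin (k + 1) → ℝ) → K}
    (hc : IsNaturalGPS c) : HasLocallyFiniteExponents c := by
  intro i a
  refine (hc.2 i (max a 1) (by positivity)).subset ?_
  rintro _ ⟨⟨α, hα, rfl⟩, ht⟩
  exact ⟨lt_max_of_lt_left ht, α, hα, rfl⟩

theorem IsMGenLaurent.exists_evalSeries {F : M → K} (hF : IsMGenLaurent F) :
    ∃ (k : ℕ) (m : Fin (k + 1) → M) (d : (Fin (k + 1) → ℝ) → K),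
      (∀ i, m i < 0) ∧ HasLocallyFiniteExponents d ∧ F = evalSeries m d := by
  obtain ⟨k, m, β, c, hm, hc, hF⟩ := hF
  refine ⟨k, m, fun γ => c (-β + γ), hm, hc.hasLocallyFiniteExponents.comp_add_left (-β),
    funext fun g => ?_⟩
  simp only [hF, ← finsum_comp_add_left_eq_evalSeries m _ β, neg_add_cancel_left]

theorem isMGenLaurent_evalSeries {k : ℕ} {m : Fin (k + 1) → M} {d : (Fin (k + 1) → ℝ) → K}
    (hm : ∀ i, m i < 0) (hd : HasLocallyFiniteExponents d) : IsMGenLaurent (evalSeries m d) := by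
  choose β hβ using hd.bddBelow
  refine ⟨k, m, β, fun α => d (β + α), hm, ⟨fun α hα i => ?_, fun i a _ => ?_⟩,
    fun g => (finsum_comp_add_left_eq_evalSeries m d β g).symm⟩
  · simpa using hβ i ⟨_, hα, rfl⟩
  · refine (hd.comp_add_left β i a).subset ?_
    rintro _ ⟨ht, α, hα, rfl⟩
    exact ⟨⟨α, hα, rfl⟩, ht⟩

end Laurent

theorem stmt6_general {M K : Type*} [AddCommGroup M] [LinearOrder M] [IsOrderedAddMonoid M] [Module ℝ M] [PosSMulStrictMono ℝ M]
    [CommRing K] (F G : M → K) (hF : IsMGenLaurent F) (hG : IsMGenLaurent G) :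
    IsMGenLaurent (F + G) ∧
    (∀ g : M, {q : M | F q ≠ 0 ∧ G (g - q) ≠ 0}.Finite) ∧
    IsMGenLaurent (fun g => ∑ᶠ q : M, F q * G (g - q)) := by
  obtain ⟨k₁, m₁, d₁, hm₁, hd₁, rfl⟩ := hF.exists_evalSeries
  obtain ⟨k₂, m₂, d₂, hm₂, hd₂, rfl⟩ := hG.exists_evalSeries
  have hm : ∀ i, Fin.append m₁ m₂ i < 0 := Fin.addCases (by simpa using hm₁) (by simpa using hm₂)
  refine ⟨?_, finite_antidiagonal_evalSeries hm₁ hm₂ hd₁ hd₂, ?_⟩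
  · rw [evalSeries_add_evalSeries hm₁ hm₂ hd₁ hd₂]
    exact isMGenLaurent_evalSeries hm
      ((hd₁.tensor (.single 1)).add ((HasLocallyFiniteExponents.single 1).tensor hd₂))
  · simp_rw [finsum_evalSeries_mul_evalSeries hm₁ hm₂ hd₁ hd₂]
    exact isMGenLaurent_evalSeries hm (hd₁.tensor hd₂)

/-- The set of `M`-generalized Laurent series over `K` is a subring of the Hahn series
ring `K[[M]]`: it is closed under addition, and closed under multiplication (the
Hahn-series convolution product, which is well defined: for each monomial `g` only
finitely many pairs contribute). -/
theorem stmt6 {M K : Type*} [AddCommGroup M] [LinearOrder M] [IsOrderedAddMonoid M] [Module ℝ M] [PosSMulStrictMono ℝ M] [PosSMulReflectLT ℝ M]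
    [CommRing K] (F G : M → K) (hF : IsMGenLaurent F) (hG : IsMGenLaurent G) :
    IsMGenLaurent (F + G) ∧
    (∀ g : M, {q : M | F q ≠ 0 ∧ G (g - q) ≠ 0}.Finite) ∧
    IsMGenLaurent (fun g => ∑ᶠ q : M, F q * G (g - q)) :=
  stmt6_general F G hF hG
end

section
/- Let F be an M-generalized power series over a commutative ring K with generating monomials m₀,...,m_k, with small leading monomial, and let P = Σ_ν a_ν T^ν be a formal power series in one variable over K. Then the composition P ∘ F := Σ_ν a_ν F^ν is a well-defined M-generalized power series with the same generating monomials m₀,...,m_k. If moreover supp(F) is M-natural and the powers lm(F)^ν are coinitial in M, then P ∘ F has M-natural support. -/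
/-!
Let `φ α = ∑ i, α i • m i`. As every `m i` is negative, `φ` is strictly antitone for the
coordinatewise order, so it has finite fibres on partially well-ordered sets of exponents, and a
natural support is partially well-ordered (Dickson's lemma). The supports of all powers `G^ν` lie
in the additive monoid generated by `supp G`, which is again natural; as `lm F < 0` forces
`0 ∉ supp G`, the coordinate sum on `supp G^ν` grows linearly in `ν`. Hence each exponent occurs
in only finitely many `G^ν`, and `P ∘ G` is well defined with natural support.

Pushing coefficients forward along `φ` is multiplicative (truncated to the finitely many relevant
exponents it is the map of monoid algebras induced by `φ`), so `supp F^ν` lies in the `ν`-fold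
sumset of `supp F`. These sumsets are `M`-natural and bounded above by `ν • lm F`, so by
coinitiality only finitely many of them reach above a given `n`.
-/

open scoped Classical

/-- Convolution product of coefficient functions of generalized power series. -/
noncomputable def cMul {K : Type*} [CommRing K] {k : ℕ}
    (c d : (Fin (k + 1) → ℝ) → K) : (Fin (k + 1) → ℝ) → K :=
  fun α => ∑ᶠ β : Fin (k + 1) → ℝ, c β * d (α - β)

/-- Convolution powers `G^ν` of a generalized power series. -/
noncomputable def cPow {K : Type*} [CommRing K] {k : ℕ}
    (c : (Fin (k + 1) → ℝ) → K) : ℕ → (Fin (k + 1) → ℝ) → K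
  | 0 => fun α => if α = 0 then 1 else 0
  | n + 1 => cMul c (cPow c n)

open scoped Pointwise
open Function Set

def Set.IsNatural (V : Set ℝ) : Prop :=
  (∀ v ∈ V, 0 ≤ v) ∧ ∀ a, (V ∩ Iio a).Finite

namespace Set.IsNatural

variable {V W : Set ℝ}

theorem mono (hV : V.IsNatural) (hWV : W ⊆ V) : W.IsNatural :=
  ⟨fun w hw => hV.1 w (hWV hw), fun a => (hV.2 a).subset (inter_subset_inter_left _ hWV)⟩

theorem isPWO (hV : V.IsNatural) : V.IsPWO := by
  refine IsWF.isPWO (isWF_iff_no_descending_seq.2 fun f hf hfV => ?_)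
  refine infinite_range_of_injective hf.injective ((hV.2 (f 0 + 1)).subset ?_)
  rintro _ ⟨n, rfl⟩
  exact ⟨hfV n, (hf.antitone (Nat.zero_le n)).trans_lt (lt_add_one _)⟩

theorem addSubmonoidClosure (hV : V.IsNatural) : (AddSubmonoid.closure V : Set ℝ).IsNatural := by
  have hnonneg : ∀ x ∈ AddSubmonoid.closure V, 0 ≤ x := fun x hx =>
    AddSubmonoid.closure_induction (fun v hv => hV.1 v hv) le_rfl
      (fun _ _ _ _ hx hy => add_nonneg hx hy) hx
  refine ⟨hnonneg, fun a => ?_⟩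
  classical
  set A : Finset ℝ := (hV.2 a).toFinset.filter (0 < ·)
  have hA : ∀ x ∈ AddSubmonoid.closure V, x < a → x ∈ AddSubmonoid.closure (A : Set ℝ) := by
    intro x hx
    induction hx using AddSubmonoid.closure_induction with
    | mem v hv =>
      intro hva
      rcases (hV.1 v hv).eq_or_lt with rfl | hv0
      · exact zero_mem _
      · exact AddSubmonoid.subset_closure (by simp [A, hv, hva, hv0])
    | zero => exact fun _ => zero_mem _
    | add x y hx hy ihx ihy =>
      intro hxy
      have := hnonneg x hx
      have := hnonneg y hy
      exact add_mem (ihx (by linarith)) (ihy (by linarith))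
  -- a sum of multiples of elements of `A` below `a` uses each `v ∈ A` at most `a / v` times
  set N := A.sup fun v => ⌈a / v⌉₊
  refine ((finite_univ (α := A → Fin (N + 1))).image
    fun n : A → Fin (N + 1) => ∑ v : A, (n v : ℕ) • (v : ℝ)).subset ?_
  rintro x ⟨hx, hxa : x < a⟩
  obtain ⟨n, rfl⟩ := AddSubmonoid.mem_closure_finset'.1 (hA x hx hxa)
  have hn : ∀ v, n v < N + 1 := by
    intro v
    have hv : 0 < (v : ℝ) := (Finset.mem_filter.1 v.2).2
    have h1 : n v • (v : ℝ) < a := lt_of_le_of_lt (Finset.single_le_sum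
      (fun w _ => nsmul_nonneg (Finset.mem_filter.1 w.2).2.le _) (Finset.mem_univ v)) hxa
    rw [nsmul_eq_mul, ← lt_div_iff₀ hv] at h1
    exact Nat.lt_succ_of_le ((Nat.cast_le.1 (h1.le.trans (Nat.le_ceil _))).trans
      (Finset.le_sup (f := fun v => ⌈a / v⌉₊) v.2))
  exact ⟨fun v => ⟨n v, hn v⟩, mem_univ _, rfl⟩

end Set.IsNatural

theorem exists_ne_zero_of_finsum_ne_zero {ι M : Type*} [AddCommMonoid M] {f : ι → M}
    (h : ∑ᶠ i, f i ≠ 0) : ∃ i, f i ≠ 0 := by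
  by_contra! hf
  exact h (finsum_eq_zero_of_forall_eq_zero hf)

section Exponents

variable {K : Type*} [CommRing K] {k : ℕ}

theorem isNaturalGPS_iff {c : (Fin (k + 1) → ℝ) → K} :
    IsNaturalGPS c ↔ ∀ i, ((· i) '' support c).IsNatural := by
  have key : ∀ i a, {t : ℝ | t < a ∧ ∃ α, c α ≠ 0 ∧ α i = t} = (· i) '' support c ∩ Iio a := by
    intro i a; ext t; simp [and_comm]
  simp only [IsNaturalGPS, Set.IsNatural, key, forall_mem_image, mem_support]
  refine ⟨fun h i => ⟨fun α hα => h.1 α hα i, fun a => ?_⟩,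
    fun h => ⟨fun α hα i => (h i).1 hα, fun i a _ => (h i).2 a⟩⟩
  exact (h.2 i (max a 1) (by positivity)).subset
    (inter_subset_inter_right _ (Iio_subset_Iio (le_max_left _ _)))

theorem IsNaturalGPS.isPWO_support {c : (Fin (k + 1) → ℝ) → K} (hc : IsNaturalGPS c) :
    (support c).IsPWO :=
  (IsPWO.pi fun i => (isNaturalGPS_iff.1 hc i).isPWO).mono fun _ hα _ _ => mem_image_of_mem _ hα

theorem IsNaturalGPS.nonneg {c : (Fin (k + 1) → ℝ) → K} (hc : IsNaturalGPS c) :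
    ∀ α ∈ support c, 0 ≤ α := fun α hα => hc.1 α hα

theorem IsNaturalGPS.of_support_subset_closure {c d : (Fin (k + 1) → ℝ) → K} (hc : IsNaturalGPS c)
    (hd : support d ⊆ AddSubmonoid.closure (support c)) : IsNaturalGPS d := by
  refine isNaturalGPS_iff.2 fun i => ((isNaturalGPS_iff.1 hc i).addSubmonoidClosure).mono ?_
  calc (· i) '' support d ⊆ (· i) '' (AddSubmonoid.closure (support c) : Set (Fin (k + 1) → ℝ)) :=
        image_mono hd
    _ = (AddSubmonoid.closure (support c)).map (Pi.evalAddMonoidHom (fun _ => ℝ) i) := rfl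
    _ = _ := by rw [AddMonoidHom.map_mclosure]; rfl

theorem exists_ne_zero_of_cMul_ne_zero {c d : (Fin (k + 1) → ℝ) → K} {α : Fin (k + 1) → ℝ}
    (h : cMul c d α ≠ 0) : ∃ β, c β ≠ 0 ∧ d (α - β) ≠ 0 := by
  obtain ⟨β, hβ⟩ := exists_ne_zero_of_finsum_ne_zero h
  exact ⟨β, left_ne_zero_of_mul hβ, right_ne_zero_of_mul hβ⟩

theorem support_cMul_subset (c d : (Fin (k + 1) → ℝ) → K) :
    support (cMul c d) ⊆ support c + support d := fun α hα => by
  obtain ⟨β, hβ, hγ⟩ := exists_ne_zero_of_cMul_ne_zero hα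
  exact ⟨β, hβ, α - β, hγ, add_sub_cancel β α⟩

theorem support_cPow_zero (c : (Fin (k + 1) → ℝ) → K) : support (cPow c 0) ⊆ {0} := fun α hα => by
  by_contra h
  exact hα (if_neg h)

theorem support_cPow_subset_closure (c : (Fin (k + 1) → ℝ) → K) (ν : ℕ) :
    support (cPow c ν) ⊆ AddSubmonoid.closure (support c) := by
  induction ν with
  | zero => exact (support_cPow_zero c).trans (by simp)
  | succ ν ih =>
    refine (support_cMul_subset _ _).trans ?_
    rintro _ ⟨β, hβ, γ, hγ, rfl⟩
    exact add_mem (AddSubmonoid.subset_closure hβ) (ih hγ)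

theorem IsNaturalGPS.exists_pos_le_sum {c : (Fin (k + 1) → ℝ) → K} (hc : IsNaturalGPS c)
    (hc0 : c 0 = 0) : ∃ ε > 0, ∀ β ∈ support c, ε ≤ ∑ i, β i := by
  set T := insert 1 ((fun β : Fin (k + 1) → ℝ => ∑ i, β i) '' support c)
  have hT : T.IsWF := ((hc.isPWO_support.image_of_monotone
    fun _ _ h => Finset.sum_le_sum fun i _ => h i).insert 1).isWF
  refine ⟨hT.min (insert_nonempty _ _), ?_,
    fun β hβ => hT.min_le _ (mem_insert_of_mem _ ⟨β, hβ, rfl⟩)⟩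
  obtain h | ⟨β, hβ, hβT⟩ := hT.min_mem (insert_nonempty _ _)
  · rw [h]; exact one_pos
  · have hβpos : 0 < β := (hc.nonneg β hβ).lt_of_ne (by rintro rfl; exact hβ hc0)
    obtain ⟨i, hi⟩ := (Pi.lt_def.1 hβpos).2
    rw [← hβT]
    exact Finset.sum_pos' (fun j _ => hc.nonneg β hβ j) ⟨i, Finset.mem_univ i, hi⟩

theorem IsNaturalGPS.finite_setOf_cPow_ne_zero {c : (Fin (k + 1) → ℝ) → K} (hc : IsNaturalGPS c)
    (hc0 : c 0 = 0) (α : Fin (k + 1) → ℝ) : {ν | cPow c ν α ≠ 0}.Finite := by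
  obtain ⟨ε, hε, hεc⟩ := hc.exists_pos_le_sum hc0
  have hle : ∀ ν α, cPow c ν α ≠ 0 → ν * ε ≤ ∑ i, α i := by
    intro ν
    induction ν with
    | zero => intro α h; simp [mem_singleton_iff.1 (support_cPow_zero c h)]
    | succ ν ih =>
      intro α h
      obtain ⟨β, hβ, hγ⟩ := exists_ne_zero_of_cMul_ne_zero h
      have := ih _ hγ
      simp only [Pi.sub_apply, Finset.sum_sub_distrib] at this
      push_cast
      linarith [hεc β hβ]
  refine (finite_Iic ⌈(∑ i, α i) / ε⌉₊).subset fun ν hν => ?_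
  exact Nat.cast_le.1 (((le_div_iff₀ hε).2 (hle ν α hν)).trans (Nat.le_ceil _))

end Exponents

/-- With `φ α = ∑ i, α i • m i`, `pushCoeff φ c` is the coefficient function on `M` of the series
`G(m₀, …, m_k)` whose coefficients on exponents are `c`. -/
noncomputable def pushCoeff {A B R : Type*} [AddCommMonoid R] (φ : A → B) (c : A → R) (b : B) :
    R :=
  ∑ᶠ (a) (_ : φ a = b), c a

section Push

variable {A B R : Type*} [AddCommMonoid R] {φ : A → B} {c : A → R} {b : B}

theorem pushCoeff_eq_finsum_ite : pushCoeff φ c b = ∑ᶠ a, if φ a = b then c a else 0 :=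
  finsum_congr fun _ => finsum_eq_if

theorem exists_of_pushCoeff_ne_zero (h : pushCoeff φ c b ≠ 0) : ∃ a, φ a = b ∧ c a ≠ 0 := by
  rw [pushCoeff_eq_finsum_ite] at h
  obtain ⟨a, ha⟩ := exists_ne_zero_of_finsum_ne_zero h
  exact ⟨a, ite_ne_right_iff.1 ha⟩

theorem pushCoeff_eq_sum (s : Finset A) (hs : ∀ a, φ a = b → c a ≠ 0 → a ∈ s)
    (hsb : ∀ a ∈ s, φ a = b) : pushCoeff φ c b = ∑ a ∈ s, c a := by
  rw [pushCoeff_eq_finsum_ite, finsum_eq_sum_of_support_subset _ fun a ha => ?_]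
  · exact Finset.sum_congr rfl fun a h => if_pos (hsb a h)
  · exact hs a (ite_ne_right_iff.1 ha).1 (ite_ne_right_iff.1 ha).2

theorem pushCoeff_indicator {s : Set A} (h : ∀ a, φ a = b → c a ≠ 0 → a ∈ s) :
    pushCoeff φ (s.indicator c) b = pushCoeff φ c b := by
  refine finsum_congr fun a => finsum_congr fun ha => ?_
  by_cases hca : c a = 0
  · simp [hca]
  · exact indicator_of_mem (h a ha hca) c

theorem finite_fiber_of_isPWO [PartialOrder A] [Preorder B] (hφ : StrictAnti φ) {T : Set A}
    (hT : T.IsPWO) (b : B) : {a ∈ T | φ a = b}.Finite := by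
  refine IsAntichain.finite_of_partiallyWellOrderedOn (fun a ha a' ha' hne hle => ?_)
    (hT.mono fun a ha => ha.1)
  exact (hφ (lt_of_le_of_ne hle hne)).ne (ha'.2.trans ha.2.symm)

end Push

section Mul

variable {K : Type*} [CommRing K] {k : ℕ}

theorem coeff_mapDomain_eq_pushCoeff {A B R : Type*} [Semiring R] (φ : A → B)
    (x : AddMonoidAlgebra R A) (b : B) :
    (AddMonoidAlgebra.mapDomain φ x).coeff b = pushCoeff φ x.coeff b := by
  classical
  simp only [AddMonoidAlgebra.mapDomain, AddMonoidAlgebra.coeff_ofCoeff, pushCoeff]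
  rw [Finsupp.mapDomain, Finsupp.sum_apply, Finsupp.sum,
    finsum_eq_sum_of_support_subset _ (s := x.coeff.support) fun a ha => ?_]
  · refine Finset.sum_congr rfl fun a _ => ?_
    rw [finsum_eq_if, Finsupp.single_apply]
  · by_contra h
    exact ha (by simp [Finsupp.notMem_support_iff.1 h])

theorem coeff_mul_eq_cMul (x y : AddMonoidAlgebra K (Fin (k + 1) → ℝ)) :
    (x * y).coeff = cMul x.coeff y.coeff := by
  ext α
  rw [AddMonoidAlgebra.coeff_mul_apply_left, cMul, Finsupp.sum,
    finsum_eq_sum_of_support_subset _ (s := x.coeff.support)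
      fun β hβ => Finsupp.mem_support_iff.2 (left_ne_zero_of_mul hβ)]
  simp only [neg_add_eq_sub]

variable {M F : Type*} [AddCommMonoid M] [FunLike F (Fin (k + 1) → ℝ) M]
  [AddMonoidHomClass F (Fin (k + 1) → ℝ) M] (φ : F) {c d : (Fin (k + 1) → ℝ) → K}

theorem support_pushCoeff_cMul_subset_of_finite (hc : (support c).Finite)
    (hd : (support d).Finite) :
    support (pushCoeff φ (cMul c d)) ⊆ support (pushCoeff φ c) + support (pushCoeff φ d) := by
  classical
  intro b hb
  set x := AddMonoidAlgebra.ofCoeff (Finsupp.ofSupportFinite c hc)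
  set y := AddMonoidAlgebra.ofCoeff (Finsupp.ofSupportFinite d hd)
  have hx : ⇑x.coeff = c := Finsupp.ofSupportFinite_coe
  have hy : ⇑y.coeff = d := Finsupp.ofSupportFinite_coe
  rw [mem_support, ← hx, ← hy, ← coeff_mul_eq_cMul, ← coeff_mapDomain_eq_pushCoeff,
    AddMonoidAlgebra.mapDomain_mul] at hb
  obtain ⟨b₁, hb₁, b₂, hb₂, rfl⟩ :=
    Finset.mem_add.1 (AddMonoidAlgebra.support_coeff_mul_subset _ _ (Finsupp.mem_support_iff.2 hb))
  rw [Finsupp.mem_support_iff, coeff_mapDomain_eq_pushCoeff, hx] at hb₁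
  rw [Finsupp.mem_support_iff, coeff_mapDomain_eq_pushCoeff, hy] at hb₂
  exact ⟨b₁, hb₁, b₂, hb₂, rfl⟩

theorem support_pushCoeff_cMul_subset [Preorder M] (hφ : StrictAnti φ)
    (hc : (support c).IsPWO) (hd : (support d).IsPWO) :
    support (pushCoeff φ (cMul c d)) ⊆ support (pushCoeff φ c) + support (pushCoeff φ d) := by
  intro b hb
  set pairs := {p : (Fin (k + 1) → ℝ) × (Fin (k + 1) → ℝ) |
    c p.1 ≠ 0 ∧ d p.2 ≠ 0 ∧ φ (p.1 + p.2) = b}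
  have hpairs : pairs.Finite := by
    refine ((finite_fiber_of_isPWO hφ (hc.add hd) b).biUnion
      fun a _ => AddAntidiagonal.finite_of_isPWO hc hd a).subset ?_
    rintro ⟨β, γ⟩ ⟨hβ, hγ, hb⟩
    exact mem_biUnion ⟨add_mem_add hβ hγ, hb⟩ ⟨hβ, hγ, rfl⟩
  -- only the finitely many `pairs` contribute at `b`, so `c` and `d` may be truncated to them
  set c' := (Prod.fst '' pairs).indicator c
  set d' := (Prod.snd '' pairs).indicator d
  have hcd : pushCoeff φ (cMul c d) b = pushCoeff φ (cMul c' d') b := by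
    refine finsum_congr fun α => finsum_congr fun hα => finsum_congr fun β => ?_
    simp only [c', d']
    by_cases hβ : c β = 0
    · simp [indicator_apply, hβ]
    by_cases hγ : d (α - β) = 0
    · simp [indicator_apply, hγ]
    have hp : (β, α - β) ∈ pairs := ⟨hβ, hγ, by simpa using hα⟩
    rw [indicator_of_mem (mem_image_of_mem _ hp), indicator_of_mem (mem_image_of_mem _ hp)]
  rw [mem_support, hcd] at hb
  obtain ⟨b₁, hb₁, b₂, hb₂, rfl⟩ := support_pushCoeff_cMul_subset_of_finite φ
    ((hpairs.image _).subset support_indicator_subset)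
    ((hpairs.image _).subset support_indicator_subset) hb
  obtain ⟨β₀, hβ₀, hcβ₀⟩ := exists_of_pushCoeff_ne_zero hb₁
  obtain ⟨γ₀, hγ₀, hdγ₀⟩ := exists_of_pushCoeff_ne_zero hb₂
  have hdγ₀' : d γ₀ ≠ 0 := (indicator_apply_ne_zero.1 hdγ₀).2
  have hcβ₀' : c β₀ ≠ 0 := (indicator_apply_ne_zero.1 hcβ₀).2
  refine ⟨b₁, ?_, b₂, ?_, rfl⟩
  · rwa [mem_support, ← pushCoeff_indicator fun β hβ hcβ => mem_image_of_mem Prod.fst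
      (show (β, γ₀) ∈ pairs from ⟨hcβ, hdγ₀', by rw [map_add, hβ, hγ₀]⟩)]
  · rwa [mem_support, ← pushCoeff_indicator fun γ hγ hdγ => mem_image_of_mem Prod.snd
      (show (β₀, γ) ∈ pairs from ⟨hcβ₀', hdγ, by rw [map_add, hβ₀, hγ]⟩)]

end Mul

theorem strictAnti_linearCombination {M : Type*} [AddCommGroup M] [PartialOrder M]
    [IsOrderedAddMonoid M] [Module ℝ M] [PosSMulStrictMono ℝ M] {k : ℕ} {m : Fin (k + 1) → M}
    (hm : ∀ i, m i < 0) : StrictAnti (Fintype.linearCombination ℝ m) := by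
  intro α β hαβ
  obtain ⟨i, hi⟩ := (Pi.lt_def.1 hαβ).2
  have hneg : Fintype.linearCombination ℝ m (β - α) < 0 := by
    rw [Fintype.linearCombination_apply]
    refine (Finset.sum_lt_sum (g := fun _ => 0)
      (fun j _ => smul_nonpos_of_nonneg_of_nonpos (sub_nonneg.2 (hαβ.le j)) (hm j).le)
      ⟨i, Finset.mem_univ i, smul_neg_of_pos_of_neg (sub_pos.2 hi) (hm i)⟩).trans_eq ?_
    simp
  rw [map_sub] at hneg
  exact sub_neg.1 hneg

noncomputable def cComp {K : Type*} [CommRing K] {k : ℕ} (P : PowerSeries K)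
    (c : (Fin (k + 1) → ℝ) → K) : (Fin (k + 1) → ℝ) → K :=
  fun α => ∑ᶠ ν : ℕ, PowerSeries.coeff ν P * cPow c ν α

section Composition

variable {K : Type*} [CommRing K] {k : ℕ} {P : PowerSeries K} {c : (Fin (k + 1) → ℝ) → K}

theorem exists_cPow_ne_zero_of_cComp_ne_zero {α : Fin (k + 1) → ℝ} (h : cComp P c α ≠ 0) :
    ∃ ν, cPow c ν α ≠ 0 := by
  obtain ⟨ν, hν⟩ := exists_ne_zero_of_finsum_ne_zero h
  exact ⟨ν, right_ne_zero_of_mul hν⟩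

theorem support_cComp_subset_closure (P : PowerSeries K) (c : (Fin (k + 1) → ℝ) → K) :
    support (cComp P c) ⊆ AddSubmonoid.closure (support c) := fun α hα => by
  obtain ⟨ν, hν⟩ := exists_cPow_ne_zero_of_cComp_ne_zero hα
  exact support_cPow_subset_closure c ν hν

theorem isNaturalGPS_cComp (hc : IsNaturalGPS c) : IsNaturalGPS (cComp P c) :=
  hc.of_support_subset_closure (support_cComp_subset_closure P c)

theorem IsNaturalGPS.support_pushCoeff_cComp_subset {M : Type*} [Preorder M]
    {φ : (Fin (k + 1) → ℝ) → M} (hφ : StrictAnti φ) (hc : IsNaturalGPS c)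
    (hc0 : c 0 = 0) :
    support (pushCoeff φ (cComp P c)) ⊆ ⋃ ν, support (pushCoeff φ (cPow c ν)) := by
  intro b hb
  by_contra! h
  simp only [mem_iUnion, mem_support, not_exists, not_not] at h
  have hclosure := IsPWO.addSubmonoid_closure hc.nonneg hc.isPWO_support
  obtain ⟨fib, hfib⟩ := finite_fiber_of_isPWO hφ hclosure b |>.exists_finset_coe
  have hmem : ∀ α, α ∈ fib ↔ α ∈ AddSubmonoid.closure (support c) ∧ φ α = b := fun α => by
    rw [← Finset.mem_coe, hfib]; rfl
  have hpush : ∀ d : (Fin (k + 1) → ℝ) → K, support d ⊆ AddSubmonoid.closure (support c) →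
      pushCoeff φ d b = ∑ α ∈ fib, d α := fun d hd =>
    pushCoeff_eq_sum fib (fun α hα hdα => (hmem α).2 ⟨hd hdα, hα⟩) fun α hα => ((hmem α).1 hα).2
  set N := fib.biUnion fun α => (hc.finite_setOf_cPow_ne_zero hc0 α).toFinset
  have hcomp : ∀ α ∈ fib, cComp P c α = ∑ ν ∈ N, PowerSeries.coeff ν P * cPow c ν α :=
    fun α hα => finsum_eq_sum_of_support_subset _ fun ν hν =>
      Finset.mem_biUnion.2 ⟨α, hα, (Finite.mem_toFinset _).2 (right_ne_zero_of_mul hν)⟩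
  apply hb
  rw [hpush _ (support_cComp_subset_closure P c), Finset.sum_congr rfl hcomp, Finset.sum_comm]
  refine Finset.sum_eq_zero fun ν _ => ?_
  rw [← Finset.mul_sum, ← hpush _ (support_cPow_subset_closure c ν), h ν, mul_zero]

variable {M F : Type*} [AddCommMonoid M] [FunLike F (Fin (k + 1) → ℝ) M]
  [AddMonoidHomClass F (Fin (k + 1) → ℝ) M] {φ : F}

theorem IsNaturalGPS.pushCoeff_zero [Preorder M] (hφ : StrictAnti φ) (hc : IsNaturalGPS c) :
    pushCoeff φ c 0 = c 0 := by
  rw [pushCoeff, finsum_eq_single _ 0 fun α hα => ?_, finsum_eq_if, if_pos (map_zero φ)]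
  by_cases hcα : c α = 0
  · simp [hcα]
  · have : φ α < φ 0 := hφ ((hc.nonneg α hcα).lt_of_ne' hα)
    rw [finsum_eq_if, if_neg (by rw [← map_zero φ]; exact this.ne)]

theorem support_pushCoeff_cPow_zero_subset (c : (Fin (k + 1) → ℝ) → K) :
    support (pushCoeff φ (cPow c 0)) ⊆ {0} := fun b hb => by
  obtain ⟨α, rfl, hα⟩ := exists_of_pushCoeff_ne_zero hb
  rw [mem_singleton_iff.1 (support_cPow_zero c hα), map_zero]
  rfl

theorem IsNaturalGPS.support_pushCoeff_cPow_succ_subset [Preorder M] (hφ : StrictAnti φ)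
    (hc : IsNaturalGPS c) (ν : ℕ) : support (pushCoeff φ (cPow c (ν + 1))) ⊆
      support (pushCoeff φ c) + support (pushCoeff φ (cPow c ν)) :=
  support_pushCoeff_cMul_subset φ hφ hc.isPWO_support
    ((IsPWO.addSubmonoid_closure hc.nonneg hc.isPWO_support).mono (support_cPow_subset_closure c ν))

end Composition

section OrderedGroup

variable {M : Type*} [AddCommGroup M] [PartialOrder M] [IsOrderedAddMonoid M]
  {S : Set M} {T : ℕ → Set M} {g₀ : M}

theorem le_nsmul_of_mem_of_subset_add (hS : ∀ g ∈ S, g ≤ g₀) (hT0 : T 0 ⊆ {0})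
    (hT : ∀ ν, T (ν + 1) ⊆ S + T ν) : ∀ ν, ∀ g ∈ T ν, g ≤ ν • g₀ := by
  intro ν
  induction ν with
  | zero => intro g hg; rw [hT0 hg, zero_smul]
  | succ ν ih =>
    rintro _ hg
    obtain ⟨g₁, hg₁, g₂, hg₂, rfl⟩ := hT ν hg
    rw [succ_nsmul']
    exact add_le_add (hS g₁ hg₁) (ih g₂ hg₂)

theorem finite_inter_Ioi_of_subset_add (hS : ∀ g ∈ S, g ≤ g₀) (hSf : ∀ n, (S ∩ Ioi n).Finite)
    (hT0 : T 0 ⊆ {0}) (hT : ∀ ν, T (ν + 1) ⊆ S + T ν) : ∀ ν n, (T ν ∩ Ioi n).Finite := by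
  intro ν
  induction ν with
  | zero => exact fun n => (finite_singleton 0).subset (inter_subset_left.trans hT0)
  | succ ν ih =>
    intro n
    refine ((hSf (n - ν • g₀)).add (ih (n - g₀))).subset ?_
    rintro _ ⟨hg, hng⟩
    obtain ⟨g₁, hg₁, g₂, hg₂, rfl⟩ := hT ν hg
    have h₁ := hS g₁ hg₁
    have h₂ := le_nsmul_of_mem_of_subset_add hS hT0 hT ν g₂ hg₂
    refine ⟨g₁, ⟨hg₁, ?_⟩, g₂, ⟨hg₂, ?_⟩, rfl⟩
    · exact sub_lt_iff_lt_add.2 (hng.trans_le (add_le_add le_rfl h₂))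
    · exact sub_lt_iff_lt_add'.2 (hng.trans_le (add_le_add h₁ le_rfl))

theorem finite_iUnion_inter_Ioi_of_subset_add (hS : ∀ g ∈ S, g ≤ g₀)
    (hSf : ∀ n, (S ∩ Ioi n).Finite) (hT0 : T 0 ⊆ {0}) (hT : ∀ ν, T (ν + 1) ⊆ S + T ν)
    (hg₀ : g₀ ≤ 0) (hco : ∀ n, ∃ ν : ℕ, ν • g₀ ≤ n) (n : M) : ((⋃ ν, T ν) ∩ Ioi n).Finite := by
  obtain ⟨ν₀, hν₀⟩ := hco n
  refine ((finite_Iio ν₀).biUnion fun ν _ =>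
    finite_inter_Ioi_of_subset_add hS hSf hT0 hT ν n).subset ?_
  rintro g ⟨hg, hng⟩
  obtain ⟨ν, hν⟩ := mem_iUnion.1 hg
  refine mem_biUnion (mem_Iio.2 <| not_le.1 fun hle => ?_) ⟨hν, hng⟩
  exact (hng.trans_le ((le_nsmul_of_mem_of_subset_add hS hT0 hT ν g hν).trans
    ((nsmul_le_nsmul_left_of_nonpos hg₀ hle).trans hν₀))).false

end OrderedGroup

/-- The multiplicatively written linearly ordered `ℝ`-vector space `M` is formalized
additively: `m^α` corresponds to `∑ i, α i • m i` and small (`< 1`) to `< 0`.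

Let `F = G(m₀,…,m_k)` be an `M`-generalized power series over `K` (coefficient function
`c` with natural support) whose leading monomial `g₀` is small, and let
`P = Σ_ν a_ν T^ν` be a formal power series over `K`.  Then `P ∘ F := Σ_ν a_ν F^ν` is a
well-defined `M`-generalized power series with the same generating monomials
`m₀, …, m_k`: for each exponent `α` only finitely many `ν` contribute, and the composed
coefficient function `α ↦ Σ_ν a_ν (G^ν)_α` again has natural support.  If moreover
`supp F` is `M`-natural and the powers `lm(F)^ν` are coinitial in `M`, then `P ∘ F` has
`M`-natural support. -/
theorem stmt8 {M K : Type*} [AddCommGroup M] [LinearOrder M] [IsOrderedAddMonoid M] [Module ℝ M] [PosSMulStrictMono ℝ M]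
    [CommRing K]
    (k : ℕ) (m : Fin (k + 1) → M) (hsmall : ∀ i, m i < 0)
    (c : (Fin (k + 1) → ℝ) → K) (hc : IsNaturalGPS c)
    (F : M → K)
    (hFc : ∀ g : M, F g = ∑ᶠ (α : Fin (k + 1) → ℝ) (_ : ∑ i, α i • m i = g), c α)
    (g₀ : M) (hlm : F g₀ ≠ 0 ∧ g₀ < 0 ∧ ∀ g, F g ≠ 0 → g ≤ g₀)
    (P : PowerSeries K) :
    ((∀ α : Fin (k + 1) → ℝ, {ν : ℕ | cPow c ν α ≠ 0}.Finite) ∧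
      IsNaturalGPS (fun α => ∑ᶠ ν : ℕ, PowerSeries.coeff ν P * cPow c ν α)) ∧
    ((∀ n : M, {g : M | F g ≠ 0 ∧ n < g}.Finite) →
      (∀ n : M, ∃ ν : ℕ, (ν : ℝ) • g₀ ≤ n) →
      ∀ n : M, {g : M |
        (∑ᶠ (α : Fin (k + 1) → ℝ) (_ : ∑ i, α i • m i = g),
          ∑ᶠ ν : ℕ, PowerSeries.coeff ν P * cPow c ν α) ≠ 0 ∧ n < g}.Finite) := by
  set φ := Fintype.linearCombination ℝ m
  have hφ : StrictAnti φ := strictAnti_linearCombination hsmall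
  have hF : F = pushCoeff φ c := funext hFc
  have hc0 : c 0 = 0 := by
    by_contra h
    rw [← hc.pushCoeff_zero hφ, ← hF] at h
    exact (hlm.2.2 0 h).not_gt hlm.2.1
  refine ⟨⟨hc.finite_setOf_cPow_ne_zero hc0, isNaturalGPS_cComp hc⟩, fun hFnat hco n => ?_⟩
  have hT := finite_iUnion_inter_Ioi_of_subset_add (S := support F)
    (T := fun ν => support (pushCoeff φ (cPow c ν))) (fun g hg => hlm.2.2 g hg) hFnat
    (support_pushCoeff_cPow_zero_subset c) (hF ▸ hc.support_pushCoeff_cPow_succ_subset hφ)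
    hlm.2.1.le (fun n => (hco n).imp fun ν hν => by rwa [Nat.cast_smul_eq_nsmul] at hν) n
  exact hT.subset fun g ⟨hg, hng⟩ => ⟨hc.support_pushCoeff_cComp_subset hφ hc0 hg, hng⟩
end

section
/- For C > 0 and ε ∈ (0,1), the map φ_C^ε : H(0) → ℂ defined by φ_C^ε(z) = z + C(1+z)^ε (standard branch of the power function on the right half-plane H(0) = {Re z > 0}) is injective, hence biholomorphic onto its image. -/
/-!
The derivative `1 + C ε (1 + ξ)^(ε - 1)` has positive real part on `H(0)`, because
`(1 + ξ)^(ε - 1)` has argument `(ε - 1) arg (1 + ξ) ∈ (-π/2, π/2)`. A holomorphic map whose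
derivative has positive real part on a convex set is injective there: along the segment from
`z` to `w`, the real function `t ↦ Re (conj (w - z) f (z + t (w - z)))` has derivative
`‖w - z‖² Re f' > 0`, so it cannot take the same value at `t = 0` and `t = 1`.
-/

open Complex ComplexConjugate Set

theorem Complex.re_cpow_ofReal_pos {w : ℂ} (hw : 0 < w.re) {s : ℝ} (hs : |s| ≤ 1) :
    0 < (w ^ (s : ℂ)).re := by
  have hw0 : w ≠ 0 := fun h => by simp [h] at hw
  rw [cpow_def_of_ne_zero hw0, exp_re]
  refine mul_pos (Real.exp_pos _) (Real.cos_pos_of_mem_Ioo ?_)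
  have him : (log w * s).im = s * w.arg := by simp [mul_im, log_im, mul_comm]
  have harg : |w.arg| < Real.pi / 2 := abs_arg_lt_pi_div_two_iff.mpr (Or.inl hw)
  have hbound : |s * w.arg| < Real.pi / 2 := by
    rw [abs_mul]
    calc |s| * |w.arg| ≤ 1 * |w.arg| := by gcongr
      _ < Real.pi / 2 := by rwa [one_mul]
  rw [him, mem_Ioo, ← abs_lt]
  exact hbound

theorem Convex.injOn_of_hasDerivAt_re_pos {f f' : ℂ → ℂ} {s : Set ℂ} (hs : Convex ℝ s)
    (hf : ∀ z ∈ s, HasDerivAt f (f' z) z) (hf' : ∀ z ∈ s, 0 < (f' z).re) : InjOn f s := by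
  intro z hz w hw hfzw
  by_contra hne
  set u := w - z
  have hu : u ≠ 0 := sub_ne_zero.mpr (Ne.symm hne)
  have hseg : ∀ t ∈ Icc (0 : ℝ) 1, z + t * u ∈ s := fun t ht =>
    hs.add_smul_sub_mem hz hw ht
  let h : ℝ → ℝ := fun t => (conj u * f (z + t * u)).re
  have hderiv : ∀ t ∈ Icc (0 : ℝ) 1,
      HasDerivAt h (conj u * (f' (z + t * u) * u)).re t := by
    intro t ht
    have hline : HasDerivAt (fun t : ℝ => z + t * u) u t := by
      simpa using ((ofRealCLM.hasDerivAt (x := t)).mul_const u).const_add z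
    exact reCLM.hasFDerivAt.comp_hasDerivAt t
      (((hf _ (hseg t ht)).comp t hline).const_mul (conj u))
  have hderiv_pos : ∀ t ∈ Icc (0 : ℝ) 1, 0 < (conj u * (f' (z + t * u) * u)).re := by
    intro t ht
    rw [mul_left_comm, mul_comm (conj u), mul_conj, re_mul_ofReal]
    exact mul_pos (hf' _ (hseg t ht)) (normSq_pos.mpr hu)
  obtain ⟨c, hc, hslope⟩ := exists_hasDerivAt_eq_slope h _ zero_lt_one
    (fun t ht => (hderiv t ht).continuousAt.continuousWithinAt)
    (fun t ht => hderiv t (Ioo_subset_Icc_self ht))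
  have hends : h 1 = h 0 := by simp [h, u, hfzw]
  rw [hends, sub_self, zero_div] at hslope
  exact (hderiv_pos c (Ioo_subset_Icc_self hc)).ne' hslope

theorem hasDerivAt_add_mul_one_add_cpow (C ε : ℝ) {ξ : ℂ} (hξ : 1 + ξ ∈ slitPlane) :
    HasDerivAt (fun z : ℂ => z + C * (1 + z) ^ (ε : ℂ))
      (1 + C * (ε * (1 + ξ) ^ ((ε : ℂ) - 1))) ξ := by
  have h := (hasDerivAt_id ξ).add
    ((((hasDerivAt_id ξ).const_add 1).cpow_const (c := ε) hξ).const_mul (C : ℂ))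
  rwa [mul_one] at h

theorem re_deriv_add_mul_one_add_cpow_pos {C ε : ℝ} (hC : 0 ≤ C) (hε : ε ∈ Icc (0 : ℝ) 2)
    {ξ : ℂ} (hξ : 0 < (1 + ξ).re) : 0 < (1 + C * (ε * (1 + ξ) ^ ((ε : ℂ) - 1))).re := by
  have hpow : 0 < ((1 + ξ) ^ ((ε - 1 : ℝ) : ℂ)).re :=
    re_cpow_ofReal_pos hξ (abs_le.mpr ⟨by linarith [hε.1], by linarith [hε.2]⟩)
  push_cast at hpow
  have hre : (1 + C * (ε * (1 + ξ) ^ ((ε : ℂ) - 1))).re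
      = 1 + C * (ε * ((1 + ξ) ^ ((ε : ℂ) - 1)).re) := by
    simp only [add_re, one_re, re_ofReal_mul]
  rw [hre]
  have := mul_nonneg hC (mul_nonneg hε.1 hpow.le)
  linarith

/-- For `C > 0` and `ε ∈ (0,1)`, the map `φ_C^ε(z) = z + C(1+z)^ε` (principal branch of
the power function) is holomorphic and injective on the right half-plane
`H(0) = {Re z > 0}`, hence biholomorphic onto its image. -/
theorem stmt9 (C ε : ℝ) (hC : 0 < C) (hε : ε ∈ Set.Ioo (0 : ℝ) 1) :
    DifferentiableOn ℂ (fun z : ℂ => z + C * (1 + z) ^ (ε : ℂ)) {z : ℂ | 0 < z.re} ∧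
    Set.InjOn (fun z : ℂ => z + C * (1 + z) ^ (ε : ℂ)) {z : ℂ | 0 < z.re} := by
  have hshift : ∀ ξ ∈ {z : ℂ | 0 < z.re}, 0 < (1 + ξ).re := fun ξ (hξ : 0 < ξ.re) => by
    rw [add_re, one_re]
    linarith
  have hderiv : ∀ ξ ∈ {z : ℂ | 0 < z.re}, HasDerivAt (fun z : ℂ => z + C * (1 + z) ^ (ε : ℂ))
      (1 + C * (ε * (1 + ξ) ^ ((ε : ℂ) - 1))) ξ := fun ξ hξ =>
    hasDerivAt_add_mul_one_add_cpow C ε (Or.inl (hshift ξ hξ))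
  refine ⟨fun ξ hξ => (hderiv ξ hξ).differentiableAt.differentiableWithinAt, ?_⟩
  exact (convex_halfSpace_re_gt 0).injOn_of_hasDerivAt_re_pos hderiv fun ξ hξ =>
    re_deriv_add_mul_one_add_cpow_pos hC.le ⟨hε.1.le, by linarith [hε.2]⟩ (hshift ξ hξ)
end

section
/- For C > 0 and ε ∈ (0,1), as r → +∞ in ℝ one has Re φ_C^ε(ir) ∼ C cos(επ/2) r^ε and Im φ_C^ε(ir) ∼ r, where φ_C^ε(z) = z + C(1+z)^ε with the standard branch of the power function on the right half-plane, and f ∼ g means f/g → 1. -/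
/-!
Since `Re (1 + ir) = 1 > 0`, the principal argument of `1 + ir` is `arctan r`, so
`(1 + ir)^ε = |1 + ir|^ε e^{iε arctan r}` with `|1 + ir| ∼ r` and `ε arctan r → επ/2`.
Hence `Re φ_C^ε(ir) = C |1 + ir|^ε cos(ε arctan r) ∼ C cos(επ/2) r^ε`, the constant being
nonzero because `0 < ε < 1`, while `Im φ_C^ε(ir) = r + O(r^ε) = r + o(r)`.
-/

open Filter Asymptotics Topology Complex Real

lemma isLittleO_rpow_rpow_atTop {s t : ℝ} (hst : s < t) :
    (fun x : ℝ => x ^ s) =o[atTop] fun x => x ^ t := by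
  refine (isLittleO_iff_tendsto' ?_).2 ?_
  · filter_upwards [eventually_gt_atTop 0] with x hx h
    exact absurd h (Real.rpow_pos_of_pos hx t).ne'
  · refine (tendsto_rpow_neg_atTop (sub_pos.2 hst)).congr' ?_
    filter_upwards [eventually_gt_atTop 0] with x hx
    rw [neg_sub, Real.rpow_sub hx]

namespace Complex

lemma isEquivalent_norm_add_I_mul_atTop (a : ℂ) :
    (fun r : ℝ => ‖a + I * r‖) ~[atTop] fun r => |r| := by
  have hnorm : ∀ r : ℝ, ‖I * (r : ℂ)‖ = |r| := by simp
  have hbound : (fun r : ℝ => ‖a + I * r‖ - |r|) =O[atTop] fun _ => ‖a‖ := by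
    refine IsBigO.of_bound 1 (Eventually.of_forall fun r => ?_)
    rw [← hnorm, one_mul, Real.norm_eq_abs, norm_norm]
    simpa using abs_norm_sub_norm_le (a + I * r) (I * r)
  refine hbound.trans_isLittleO ((isLittleO_const_id_atTop ‖a‖).congr' EventuallyEq.rfl ?_)
  filter_upwards [eventually_ge_atTop 0] with r hr
  exact (abs_of_nonneg hr).symm

lemma arg_one_add_I_mul (r : ℝ) : arg (1 + I * r) = Real.arctan r := by
  have hre : (1 + I * r).re = 1 := by simp
  have him : (1 + I * r).im = r := by simp
  have hlo : -(π / 2) < arg (1 + I * r) := neg_pi_div_two_lt_arg_iff.2 (Or.inl (by simp))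
  have hhi : arg (1 + I * r) < π / 2 := arg_lt_pi_div_two_iff.2 (Or.inl (by simp))
  rw [← Real.arctan_tan hlo hhi, tan_arg, hre, him, div_one]

lemma tendsto_arg_one_add_I_mul_atTop :
    Tendsto (fun r : ℝ => arg (1 + I * r)) atTop (𝓝 (π / 2)) := by
  simpa only [arg_one_add_I_mul] using Real.tendsto_arctan_atTop.mono_right nhdsWithin_le_nhds

lemma isEquivalent_norm_one_add_I_mul_rpow (ε : ℝ) :
    (fun r : ℝ => ‖1 + I * r‖ ^ ε) ~[atTop] fun r => r ^ ε := by
  refine ((isEquivalent_norm_add_I_mul_atTop 1).rpow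
    (fun r => abs_nonneg r)).trans_eventuallyEq ?_
  filter_upwards [eventually_ge_atTop 0] with r hr
  simp only [Pi.pow_apply, abs_of_nonneg hr]

lemma isEquivalent_re_one_add_I_mul_cpow {ε : ℝ} (hε : Real.cos (ε * π / 2) ≠ 0) :
    (fun r : ℝ => ((1 + I * r) ^ (ε : ℂ)).re) ~[atTop]
      fun r : ℝ => r ^ ε * Real.cos (ε * π / 2) := by
  simp only [cpow_ofReal_re]
  refine (isEquivalent_norm_one_add_I_mul_rpow ε).mul ((isEquivalent_const_iff_tendsto hε).2 ?_)
  have harg := (Real.continuous_cos.tendsto _).comp (tendsto_arg_one_add_I_mul_atTop.mul_const ε)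
  rwa [div_mul_eq_mul_div, mul_comm π] at harg

lemma isBigO_im_one_add_I_mul_cpow (ε : ℝ) :
    (fun r : ℝ => ((1 + I * r) ^ (ε : ℂ)).im) =O[atTop] fun r => r ^ ε := by
  refine (IsBigO.of_bound 1 (Eventually.of_forall fun r => ?_)).trans
    (isEquivalent_norm_one_add_I_mul_rpow ε).isBigO
  rw [one_mul, Real.norm_of_nonneg (by positivity : 0 ≤ ‖1 + I * r‖ ^ ε), ← norm_cpow_real]
  exact abs_im_le_norm _

end Complex

/-- For `C > 0` and `ε ∈ (0,1)`, with `φ_C^ε(z) = z + C(1+z)^ε` (principal branch),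
one has `Re φ_C^ε(ir) ∼ C cos(επ/2) r^ε` and `Im φ_C^ε(ir) ∼ r` as `r → +∞`,
where `f ∼ g` means `f/g → 1`. -/
theorem stmt10 (C ε : ℝ) (hC : 0 < C) (hε : ε ∈ Set.Ioo (0 : ℝ) 1) :
    Filter.Tendsto
      (fun r : ℝ =>
        (Complex.I * r + C * (1 + Complex.I * r) ^ (ε : ℂ)).re /
          (C * Real.cos (ε * Real.pi / 2) * r ^ ε))
      Filter.atTop (nhds 1) ∧
    Filter.Tendsto
      (fun r : ℝ =>
        (Complex.I * r + C * (1 + Complex.I * r) ^ (ε : ℂ)).im / r)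
      Filter.atTop (nhds 1) := by
  obtain ⟨hε0, hε1⟩ := hε
  have hcos : 0 < Real.cos (ε * π / 2) :=
    Real.cos_pos_of_mem_Ioo ⟨by nlinarith [pi_pos], by nlinarith [pi_pos]⟩
  constructor
  · have hre := (IsEquivalent.refl (u := fun _ : ℝ => C)).mul
      (isEquivalent_re_one_add_I_mul_cpow hcos.ne')
    refine ((isEquivalent_iff_tendsto_one ?_).1 hre).congr' ?_
    · filter_upwards [eventually_gt_atTop 0] with r hr
      simp only [Pi.mul_apply]
      positivity
    · filter_upwards with r
      simp only [Pi.div_apply, Pi.mul_apply, add_re, mul_re, I_re, I_im, ofReal_re, ofReal_im]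
      ring
  · have hsmall : (fun r : ℝ => C * ((1 + I * r) ^ (ε : ℂ)).im) =o[atTop] id :=
      ((isBigO_im_one_add_I_mul_cpow ε).const_mul_left C).trans_isLittleO
        ((isLittleO_rpow_rpow_atTop hε1).congr_right fun r => Real.rpow_one r)
    have him := hsmall.add_isEquivalent (IsEquivalent.refl (u := id))
    refine ((isEquivalent_iff_tendsto_one (eventually_ne_atTop 0)).1 him).congr' ?_
    filter_upwards with r
    simp only [Pi.div_apply, Pi.add_apply, id, add_im, mul_im, I_re, I_im, ofReal_re, ofReal_im]
    ring
end

section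
/- Let C > 0, ε ∈ (0,1), and set K := C cos(επ/2) / 3^{ε/2}. There exists k ∈ (0,1) such that for all z in the standard power domain U_C^ε = φ_C^ε(H(0)), one has k·exp(K|z|^ε) ≤ |exp(z)| ≤ exp(|z|). -/
/-!
Write `z = w + C(1+w)^ε` with `Re w > 0` and put `r = |1+w| ≥ 1`. As `|arg(1+w)| ≤ π/2`,
`Re z ≥ C cos(επ/2) r^ε`, while `|z| ≤ r + C r^ε`, which is at most `3r/2` once `r` is large.
Since `(3/2)^ε ≤ 3^{ε/2}`, this gives `K|z|^ε ≤ Re z + KM` for a constant `M` absorbing the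
bounded range of `r`, and `k = exp(-KM)` works. The upper bound is `Re z ≤ |z|`.
-/

/-- The standard power domain `U_C^ε = φ_C^ε(H(0))`, where
`φ_C^ε(z) = z + C(1+z)^ε` (principal branch) and `H(0) = {Re z > 0}`. -/
def SPD (C ε : ℝ) : Set ℂ :=
  (fun z : ℂ => z + C * (1 + z) ^ (ε : ℂ)) '' {z : ℂ | 0 < z.re}

open Real

theorem Complex.cos_mul_pi_div_two_mul_norm_rpow_le_re_cpow {a : ℂ} (ha : 0 ≤ a.re) {ε : ℝ}
    (hε₀ : 0 ≤ ε) (hε₁ : ε ≤ 1) : Real.cos (ε * π / 2) * ‖a‖ ^ ε ≤ (a ^ (ε : ℂ)).re := by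
  rw [Complex.cpow_ofReal_re, mul_comm (Real.cos _)]
  gcongr
  rw [← cos_abs (a.arg * ε), abs_mul, abs_of_nonneg hε₀]
  have harg := Complex.abs_arg_le_pi_div_two_iff.2 ha
  apply cos_le_cos_of_nonneg_of_le_pi (by positivity) (by nlinarith [pi_pos])
  nlinarith [abs_nonneg a.arg]

theorem add_mul_rpow_le_three_halves_mul {C ε r : ℝ} (hr : 0 < r)
    (hCr : 2 * C ≤ r ^ (1 - ε)) : r + C * r ^ ε ≤ 3 / 2 * r := by
  have : r ^ (1 - ε) * r ^ ε = r := by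
    rw [← rpow_add hr, sub_add_cancel, rpow_one]
  nlinarith [mul_le_mul_of_nonneg_right hCr (rpow_nonneg hr.le ε)]

theorem exists_rpow_le_of_le_add_mul_rpow {C ε : ℝ} (hC : 0 ≤ C) (hε₀ : 0 ≤ ε) (hε₁ : ε < 1) :
    ∃ M > 0, ∀ r s : ℝ, 0 ≤ r → 0 ≤ s → s ≤ r + C * r ^ ε → s ^ ε ≤ (3 / 2 * r) ^ ε + M := by
  set R := max 1 ((2 * C) ^ (1 - ε)⁻¹)
  have hR : 1 ≤ R := le_max_left _ _
  refine ⟨(R + C * R ^ ε) ^ ε, by positivity, fun r s hr hs hsr => ?_⟩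
  rcases le_total r R with hrR | hRr
  · have : s ≤ R + C * R ^ ε := hsr.trans (by gcongr)
    have : s ^ ε ≤ (R + C * R ^ ε) ^ ε := by gcongr
    linarith [rpow_nonneg (by positivity : (0:ℝ) ≤ 3 / 2 * r) ε]
  · have h2C : 2 * C ≤ r ^ (1 - ε) := by
      calc 2 * C = ((2 * C) ^ (1 - ε)⁻¹) ^ (1 - ε) := by
            rw [← rpow_mul (by positivity), inv_mul_cancel₀ (by linarith), rpow_one]
        _ ≤ r ^ (1 - ε) := by gcongr; exact (le_max_right _ _).trans hRr
    have : s ≤ 3 / 2 * r := hsr.trans (add_mul_rpow_le_three_halves_mul (by linarith) h2C)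
    have : s ^ ε ≤ (3 / 2 * r) ^ ε := by gcongr
    linarith [rpow_nonneg (by positivity : (0:ℝ) ≤ R + C * R ^ ε) ε]

theorem three_halves_rpow_le {ε : ℝ} (hε : 0 ≤ ε) : (3 / 2 : ℝ) ^ ε ≤ 3 ^ (ε / 2) := by
  rw [show (3 / 2 : ℝ) ^ ε = ((3 / 2) ^ (2 : ℝ)) ^ (ε / 2) by
    rw [← rpow_mul (by norm_num)]; ring_nf]
  gcongr
  norm_num

theorem Complex.norm_le_norm_one_add {w : ℂ} (hw : 0 ≤ w.re) : ‖w‖ ≤ ‖1 + w‖ := by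
  rw [← sq_le_sq₀ (norm_nonneg _) (norm_nonneg _), Complex.sq_norm, Complex.sq_norm,
    Complex.normSq_apply, Complex.normSq_apply]
  simp only [Complex.add_re, Complex.add_im, Complex.one_re, Complex.one_im]
  nlinarith

theorem exists_norm_le_and_le_re_of_mem_SPD {C ε : ℝ} (hC : 0 ≤ C) (hε₀ : 0 ≤ ε) (hε₁ : ε ≤ 1)
    {z : ℂ} (hz : z ∈ SPD C ε) :
    ∃ r ≥ 0, ‖z‖ ≤ r + C * r ^ ε ∧ C * Real.cos (ε * π / 2) * r ^ ε ≤ z.re := by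
  obtain ⟨w, hw : 0 < w.re, rfl⟩ := hz
  refine ⟨‖1 + w‖, norm_nonneg _, ?_, ?_⟩
  · calc ‖w + C * (1 + w) ^ (ε : ℂ)‖ ≤ ‖w‖ + C * ‖(1 + w) ^ (ε : ℂ)‖ := by
          grw [norm_add_le, norm_mul, Complex.norm_real, Real.norm_of_nonneg hC]
      _ ≤ ‖1 + w‖ + C * ‖1 + w‖ ^ ε := by
          rw [Complex.norm_cpow_real]; gcongr; exact Complex.norm_le_norm_one_add hw.le
  · have := Complex.cos_mul_pi_div_two_mul_norm_rpow_le_re_cpow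
      (a := 1 + w) (by rw [Complex.add_re, Complex.one_re]; linarith) hε₀ hε₁
    simp only [Complex.add_re, Complex.re_ofReal_mul]
    nlinarith

/-- With `K := C cos(επ/2)/3^{ε/2}`, there exists `k ∈ (0,1)` such that
`k·exp(K|z|^ε) ≤ |exp z| ≤ exp |z|` for all `z ∈ U_C^ε`. -/
theorem stmt11 (C ε : ℝ) (hC : 0 < C) (hε : ε ∈ Set.Ioo (0 : ℝ) 1) :
    ∃ k ∈ Set.Ioo (0 : ℝ) 1, ∀ z ∈ SPD C ε,
      k * Real.exp (C * Real.cos (ε * Real.pi / 2) / (3 : ℝ) ^ (ε / 2) *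
          ‖z‖ ^ ε)
        ≤ ‖Complex.exp z‖ ∧
      ‖Complex.exp z‖ ≤ Real.exp ‖z‖ := by
  obtain ⟨hε₀, hε₁⟩ := hε
  have hcos : 0 < cos (ε * π / 2) :=
    cos_pos_of_mem_Ioo ⟨by nlinarith [pi_pos], by nlinarith [pi_pos]⟩
  set K := C * cos (ε * π / 2) / 3 ^ (ε / 2)
  have hK : 0 < K := by positivity
  obtain ⟨M, hM, hsM⟩ := exists_rpow_le_of_le_add_mul_rpow hC.le hε₀.le hε₁
  refine ⟨exp (-(K * M)), ⟨exp_pos _, exp_lt_one_iff.2 (by nlinarith)⟩, fun z hz => ?_⟩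
  obtain ⟨r, hr, hzr, hre⟩ := exists_norm_le_and_le_re_of_mem_SPD hC.le hε₀.le hε₁.le hz
  have hKz : K * ‖z‖ ^ ε ≤ z.re + K * M := calc
    K * ‖z‖ ^ ε ≤ K * ((3 / 2) ^ ε * r ^ ε + M) := by
        rw [← mul_rpow (by norm_num) hr]; gcongr; exact hsM r _ hr (norm_nonneg _) hzr
    _ ≤ K * (3 ^ (ε / 2) * r ^ ε + M) := by grw [three_halves_rpow_le hε₀.le]
    _ = C * cos (ε * π / 2) * r ^ ε + K * M := by unfold K; field_simp
    _ ≤ z.re + K * M := by grw [hre]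
  rw [Complex.norm_exp]
  constructor
  · rw [← exp_add]; gcongr; linarith
  · gcongr; exact Complex.re_le_norm z
end

section
/- (Uniqueness principle on standard power domains) Let U = φ_C^ε(H(0)) be a standard power domain and φ : U → ℂ holomorphic and bounded. If the restriction of φ to the positive real axis satisfies φ(x) = o(e^{-nx}) as x → +∞ for every n ∈ ℕ, then φ is identically zero. -/
open Complex Filter Set Asymptotics Topology

theorem superpolynomialDecay_exp_iff {f : ℝ → ℝ} :
    SuperpolynomialDecay atTop Real.exp f ↔
      ∀ n : ℕ, Tendsto (fun x => f x * Real.exp (n * x)) atTop (𝓝 0) := by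
  simp only [SuperpolynomialDecay, ← Real.exp_nat_mul, mul_comm (f _)]

theorem SuperpolynomialDecay.comp_of_eventually_le {α : Type*} [Preorder α] {k f : α → ℝ}
    {g : α → α} (hf : SuperpolynomialDecay atTop k f) (hf0 : 0 ≤ f) (hk : Monotone k)
    (hk0 : 0 ≤ k) (hle : ∀ᶠ x in atTop, x ≤ g x) :
    SuperpolynomialDecay atTop k (f ∘ g) := fun n ↦ by
  refine squeeze_zero' (.of_forall fun x ↦ mul_nonneg (pow_nonneg (hk0 x) n) (hf0 _)) ?_
    ((hf n).comp (tendsto_atTop_mono' _ hle tendsto_id))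
  filter_upwards [hle] with x hx
  exact mul_le_mul_of_nonneg_right (pow_le_pow_left₀ (hk0 x) (hk hx) n) (hf0 _)

theorem eqOn_zero_of_bounded_of_superpolynomialDecay_exp {E : Type*} [NormedAddCommGroup E]
    [NormedSpace ℂ E] [CompleteSpace E] {f : ℂ → E}
    (hd : DifferentiableOn ℂ f {z | 0 < z.re}) (hB : ∃ B, ∀ z : ℂ, 0 < z.re → ‖f z‖ ≤ B)
    (hre : SuperpolynomialDecay atTop Real.exp fun x : ℝ ↦ ‖f x‖) :
    EqOn f 0 {z | 0 < z.re} := by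
  obtain ⟨B, hB⟩ := hB
  -- Shifting by `1` makes `f` continuous up to the imaginary axis, as Phragmén–Lindelöf requires.
  have hshift : EqOn (fun z ↦ f (z + 1)) 0 {z | 0 ≤ z.re} := by
    have hd' : DifferentiableOn ℂ (fun z ↦ f (z + 1)) {z | -1 < z.re} :=
      hd.comp (differentiableOn_id.add_const 1) fun z hz ↦ by
        simp only [mem_ofPred_eq, add_re, one_re] at hz ⊢; linarith
    refine PhragmenLindelof.eq_zero_on_right_half_plane_of_superexponential_decay ?_ ?_ ?_ ?_
    · refine ⟨hd'.mono fun z hz ↦ ?_, hd'.continuousOn.mono fun z hz ↦ ?_⟩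
      · simp only [mem_ofPred_eq] at hz ⊢; linarith
      · rw [closure_setOfPred_lt_re] at hz
        simp only [mem_ofPred_eq] at hz ⊢; linarith
    · refine ⟨1, one_lt_two, 0, isBigO_iff.2 ⟨B, ?_⟩⟩
      filter_upwards [inf_le_right (a := Bornology.cobounded ℂ) (mem_principal_self _)]
        with z hz
      simpa using hB _ (by simp only [add_re, one_re]; linarith)
    · refine (SuperpolynomialDecay.comp_of_eventually_le (g := (· + 1)) hre
        (fun _ ↦ norm_nonneg _) Real.exp_monotone (fun _ ↦ (Real.exp_pos _).le)
        (.of_forall fun x ↦ le_add_of_nonneg_right zero_le_one)).congr fun x ↦ by simp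
    · exact ⟨B, fun y ↦ hB _ (by simp)⟩
  have hopen : IsOpen {z : ℂ | 0 < z.re} := isOpen_lt continuous_const continuous_re
  refine (hd.analyticOnNhd hopen).eqOn_zero_of_preconnected_of_eventuallyEq_zero
    (convex_halfSpace_re_gt 0).isPreconnected (z₀ := 2) (by simp) ?_
  filter_upwards [(isOpen_lt continuous_const continuous_re).mem_nhds
    (show (2 : ℂ) ∈ {z : ℂ | 1 < z.re} by norm_num)] with z hz
  simpa using hshift (show 0 ≤ (z - 1).re by simp only [sub_re, one_re] at hz ⊢; linarith)

noncomputable def powerDomainMap (C ε : ℝ) (z : ℂ) : ℂ := z + C * (1 + z) ^ (ε : ℂ)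

theorem differentiableOn_powerDomainMap (C ε : ℝ) :
    DifferentiableOn ℂ (powerDomainMap C ε) {z | -1 < z.re} := fun z hz ↦ by
  have h1z : 0 < (1 + z).re := by simp only [add_re, one_re]; linarith [mem_ofPred_eq ▸ hz]
  exact (differentiableAt_id.add ((((differentiableAt_const 1).add differentiableAt_id).cpow
    (differentiableAt_const _) (mem_slitPlane_iff.2 (.inl h1z))).const_mul _)).differentiableWithinAt

theorem powerDomainMap_ofReal (C ε : ℝ) {t : ℝ} (ht : -1 ≤ t) :
    powerDomainMap C ε t = ↑(t + C * (1 + t) ^ ε) := by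
  rw [powerDomainMap, ofReal_add, ofReal_mul, ofReal_cpow (by linarith)]
  push_cast
  rfl

theorem le_add_mul_one_add_rpow {C t : ℝ} (ε : ℝ) (hC : 0 ≤ C) (ht : -1 ≤ t) :
    t ≤ t + C * (1 + t) ^ ε :=
  le_add_of_nonneg_right (mul_nonneg hC (Real.rpow_nonneg (by linarith) ε))

theorem stmt13_general (C ε : ℝ) (hC : 0 < C)
    (φ : ℂ → ℂ) (hhol : DifferentiableOn ℂ φ (SPD C ε))
    (hbdd : ∃ B : ℝ, ∀ z ∈ SPD C ε, ‖φ z‖ ≤ B)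
    (hflat : ∀ n : ℕ,
      Filter.Tendsto (fun x : ℝ => ‖φ x‖ * Real.exp (n * x))
        Filter.atTop (nhds 0)) :
    ∀ z ∈ SPD C ε, φ z = 0 := by
  obtain ⟨B, hB⟩ := hbdd
  have hmaps : MapsTo (powerDomainMap C ε) {z | 0 < z.re} (SPD C ε) := mapsTo_image _ _
  have hdecay : SuperpolynomialDecay atTop Real.exp fun x : ℝ ↦ ‖φ (powerDomainMap C ε x)‖ :=
    (SuperpolynomialDecay.comp_of_eventually_le (superpolynomialDecay_exp_iff.2 hflat)
      (fun _ ↦ norm_nonneg _) Real.exp_monotone (fun _ ↦ (Real.exp_pos _).le)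
      ((eventually_ge_atTop (-1)).mono fun _ ↦ le_add_mul_one_add_rpow ε hC.le)).congr' <|
      (eventually_ge_atTop (-1)).mono fun _ ht ↦ by simp [powerDomainMap_ofReal C ε ht]
  have hzero : EqOn (φ ∘ powerDomainMap C ε) 0 {z | 0 < z.re} :=
    eqOn_zero_of_bounded_of_superpolynomialDecay_exp
      (hhol.comp ((differentiableOn_powerDomainMap C ε).mono fun z hz ↦ by
        simp only [mem_ofPred_eq] at hz ⊢; linarith) hmaps)
      ⟨B, fun z hz ↦ hB _ (hmaps hz)⟩ hdecay
  rintro _ ⟨z, hz, rfl⟩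
  exact hzero hz

/-- Uniqueness principle (Phragmén–Lindelöf): if `φ` is holomorphic and bounded on a
standard power domain `U = U_C^ε`, and its restriction to the positive real axis
satisfies `φ(x) = o(e^{-nx})` as `x → +∞` for every `n ∈ ℕ`, then `φ ≡ 0` on `U`. -/
theorem stmt13 (C ε : ℝ) (hC : 0 < C) (hε : ε ∈ Set.Ioo (0 : ℝ) 1)
    (φ : ℂ → ℂ) (hhol : DifferentiableOn ℂ φ (SPD C ε))
    (hbdd : ∃ B : ℝ, ∀ z ∈ SPD C ε, ‖φ z‖ ≤ B)
    (hflat : ∀ n : ℕ,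
      Filter.Tendsto (fun x : ℝ => ‖φ x‖ * Real.exp (n * x))
        Filter.atTop (nhds 0)) :
    ∀ z ∈ SPD C ε, φ z = 0 :=
  stmt13_general C ε hC φ hhol hbdd hflat
end

section
/- (Uniqueness of asymptotic expansions) Let M be an asymptotic scale (multiplicative ℝ-vector subspace of 𝓗^{>0} with at most one representative per archimedean class) and suppose the zero germ 0 ∈ 𝒞 has asymptotic expansion F = Σ a_m m ∈ ℝ[[M]]. Then F = 0. Consequently, every germ f ∈ 𝒞 has at most one asymptotic expansion in ℝ[[M]]. -/
open Filter

/-- `f ≺ g`: `g` is ultimately nonzero and `f/g → 0` at `+∞`. -/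
def Prec (f g : ℝ → ℝ) : Prop :=
  (∀ᶠ x in atTop, g x ≠ 0) ∧ Tendsto (fun x => f x / g x) atTop (nhds 0)

/-- `f ≍ g`: same archimedean class. -/
def AsympEq (f g : ℝ → ℝ) : Prop := f =O[atTop] g ∧ g =O[atTop] f

/-- `M` is an asymptotic scale: a multiplicative `ℝ`-vector subspace of the positive
germs of a Hardy field with at most one representative per archimedean class. -/
structure AsymScale (M : Set (ℝ → ℝ)) : Prop where
  pos : ∀ m ∈ M, ∀ x, 0 < m x
  one_mem : (fun _ : ℝ => (1 : ℝ)) ∈ M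
  mul_mem : ∀ m ∈ M, ∀ n ∈ M, (fun x => m x * n x) ∈ M
  rpow_mem : ∀ m ∈ M, ∀ r : ℝ, (fun x => m x ^ r) ∈ M
  total : ∀ m ∈ M, ∀ n ∈ M, m = n ∨ Prec m n ∨ Prec n m
  scale : ∀ m ∈ M, ∀ n ∈ M, AsympEq m n → m = n

/-- `f` has asymptotic expansion `Σ_{m ∈ M} a m · m` at `+∞`. -/
def HasAE (M : Set (ℝ → ℝ)) (f : ℝ → ℝ) (a : (ℝ → ℝ) → ℝ) : Prop :=
  (∀ m, a m ≠ 0 → m ∈ M) ∧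
  (∀ n ∈ M, {m : ℝ → ℝ | a m ≠ 0 ∧ Prec n m}.Finite) ∧
  ∀ n ∈ M, ∀ hfin : {m : ℝ → ℝ | a m ≠ 0 ∧ (m = n ∨ Prec n m)}.Finite,
    Prec (fun x => f x - ∑ m ∈ hfin.toFinset, a m * m x) n

/-!
If the zero germ had an expansion with a nonzero coefficient, let `m₀` be its leading monomial:
a `≺`-maximal element of the support, which exists because only finitely many monomials of the
support lie above any given one. At `n = m₀` the expansion condition reads `-a m₀ · m₀ ≺ m₀`,
so `a m₀ = 0`. Uniqueness in general follows by applying this to the difference of two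
expansions of the same germ.
-/

lemma Prec.trans {f g h : ℝ → ℝ} (hfg : Prec f g) (hgh : Prec g h) : Prec f h := by
  refine ⟨hgh.1, ?_⟩
  have := hfg.2.mul hgh.2
  rw [mul_zero] at this
  refine this.congr' ?_
  filter_upwards [hfg.1] with x hg
  field_simp

lemma Prec.irrefl (f : ℝ → ℝ) : ¬ Prec f f := by
  rintro ⟨hne, hlim⟩
  have hone : Tendsto (fun x => f x / f x) atTop (nhds 1) :=
    tendsto_const_nhds.congr' (by filter_upwards [hne] with x hx using (div_self hx).symm)
  exact one_ne_zero (tendsto_nhds_unique hone hlim)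

instance Prec.isStrictOrder : IsStrictOrder (ℝ → ℝ) Prec where
  irrefl := Prec.irrefl
  trans _ _ _ := Prec.trans

lemma Prec.sub {f g n : ℝ → ℝ} (hf : Prec f n) (hg : Prec g n) :
    Prec (fun x => f x - g x) n := by
  refine ⟨hf.1, ?_⟩
  simpa only [sub_div, sub_zero] using hf.2.sub hg.2

lemma Prec.eq_zero_of_const_mul {c : ℝ} {m : ℝ → ℝ} (h : Prec (fun x => c * m x) m) : c = 0 := by
  refine tendsto_nhds_unique (tendsto_const_nhds.congr' ?_) h.2
  filter_upwards [h.1] with x hx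
  rw [mul_div_cancel_right₀ _ hx]

lemma exists_maximal_prec {s : Set (ℝ → ℝ)} (hs : s.Finite) (hne : s.Nonempty) :
    ∃ m₀ ∈ s, ∀ m ∈ s, ¬ Prec m₀ m := by
  obtain ⟨m₀, hm₀, hmin⟩ :=
    (Set.wellFoundedOn_iff.1 (hs.wellFoundedOn (r := Function.swap Prec))).has_min s hne
  exact ⟨m₀, hm₀, fun m hm h => hmin m hm ⟨h, hm, hm₀⟩⟩

lemma sum_toFinset_eq_of_superset {ι R : Type*} [NonUnitalNonAssocSemiring R] {a g : ι → R}
    {P : ι → Prop} (hfin : {m | a m ≠ 0 ∧ P m}.Finite) {s : Finset ι} (hs : ∀ m ∈ s, P m)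
    (hsub : ∀ m, a m ≠ 0 → P m → m ∈ s) :
    ∑ m ∈ hfin.toFinset, a m * g m = ∑ m ∈ s, a m * g m := by
  refine Finset.sum_subset (fun m hm => ?_) (fun m hms hm => ?_)
  · rw [Set.Finite.mem_toFinset] at hm
    exact hsub m hm.1 hm.2
  · have : a m = 0 := by
      by_contra h
      exact hm (hfin.mem_toFinset.2 ⟨h, hs m hms⟩)
    rw [this, zero_mul]

namespace HasAE

variable {M : Set (ℝ → ℝ)} {f g : ℝ → ℝ} {a b : (ℝ → ℝ) → ℝ} {n : ℝ → ℝ}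

lemma finite_upper (ha : HasAE M f a) (hn : n ∈ M) :
    {m | a m ≠ 0 ∧ (m = n ∨ Prec n m)}.Finite :=
  ((ha.2.1 n hn).insert n).subset (by
    rintro m ⟨ham, rfl | hnm⟩
    exacts [Set.mem_insert _ _, Set.mem_insert_of_mem _ ⟨ham, hnm⟩])

lemma prec_sub_sum (ha : HasAE M f a) (hn : n ∈ M) {s : Finset (ℝ → ℝ)}
    (hs : ∀ m ∈ s, m = n ∨ Prec n m) (hsub : ∀ m, a m ≠ 0 → (m = n ∨ Prec n m) → m ∈ s) :
    Prec (fun x => f x - ∑ m ∈ s, a m * m x) n := by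
  have hfin := ha.finite_upper hn
  simpa only [sum_toFinset_eq_of_superset hfin hs hsub] using ha.2.2 n hn hfin

lemma eq_zero_of_zero (ha : HasAE M 0 a) : a = 0 := by
  by_contra hne
  obtain ⟨m₁, hm₁⟩ : ∃ m, a m ≠ 0 := Function.ne_iff.1 hne
  obtain ⟨m₀, ⟨hm₀, hm₁m₀⟩, hmax⟩ :=
    exists_maximal_prec (ha.finite_upper (ha.1 m₁ hm₁)) ⟨m₁, hm₁, Or.inl rfl⟩
  have hlead : ∀ m, a m ≠ 0 → (m = m₀ ∨ Prec m₀ m) → m ∈ ({m₀} : Finset (ℝ → ℝ)) := by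
    rintro m ham (rfl | hm₀m)
    · exact Finset.mem_singleton_self m
    · refine absurd hm₀m (hmax m ⟨ham, Or.inr ?_⟩)
      rcases hm₁m₀ with rfl | hm₁m₀
      exacts [hm₀m, hm₁m₀.trans hm₀m]
  have hprec := ha.prec_sub_sum (ha.1 m₀ hm₀) (by simp) hlead
  simp only [Pi.zero_apply, Finset.sum_singleton, zero_sub, ← neg_mul] at hprec
  exact hm₀ (neg_eq_zero.1 (Prec.eq_zero_of_const_mul hprec))

lemma sub (ha : HasAE M f a) (hb : HasAE M g b) : HasAE M (f - g) (a - b) := by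
  classical
  have hsupp : ∀ m, (a - b) m ≠ 0 → a m ≠ 0 ∨ b m ≠ 0 := fun m h => by
    by_contra! hab
    simp [hab] at h
  refine ⟨fun m h => (hsupp m h).elim (ha.1 m) (hb.1 m), fun n hn => ?_, fun n hn hfin => ?_⟩
  · refine ((ha.2.1 n hn).union (hb.2.1 n hn)).subset ?_
    rintro m ⟨h, hnm⟩
    exact (hsupp m h).imp (⟨·, hnm⟩) (⟨·, hnm⟩)
  · set U := (ha.finite_upper hn).toFinset ∪ (hb.finite_upper hn).toFinset
    have hU : ∀ m ∈ U, m = n ∨ Prec n m := by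
      intro m hm
      simp only [U, Finset.mem_union, Set.Finite.mem_toFinset] at hm
      exact hm.elim And.right And.right
    have hUa : ∀ m, a m ≠ 0 → (m = n ∨ Prec n m) → m ∈ U := fun m h hnm =>
      Finset.mem_union_left _ ((ha.finite_upper hn).mem_toFinset.2 ⟨h, hnm⟩)
    have hUb : ∀ m, b m ≠ 0 → (m = n ∨ Prec n m) → m ∈ U := fun m h hnm =>
      Finset.mem_union_right _ ((hb.finite_upper hn).mem_toFinset.2 ⟨h, hnm⟩)
    have hUab : ∀ m, (a - b) m ≠ 0 → (m = n ∨ Prec n m) → m ∈ U := fun m h hnm =>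
      (hsupp m h).elim (hUa m · hnm) (hUb m · hnm)
    convert (ha.prec_sub_sum hn hU hUa).sub (hb.prec_sub_sum hn hU hUb) using 2 with x
    rw [sum_toFinset_eq_of_superset hfin hU hUab]
    simp only [Pi.sub_apply, sub_mul, Finset.sum_sub_distrib]
    ring

end HasAE

theorem stmt16_general (M : Set (ℝ → ℝ)) :
    (∀ a : (ℝ → ℝ) → ℝ, HasAE M (fun _ => 0) a → a = 0) ∧
    (∀ (f : ℝ → ℝ) (a b : (ℝ → ℝ) → ℝ), HasAE M f a → HasAE M f b → a = b) := by
  refine ⟨fun _ => HasAE.eq_zero_of_zero, fun f a b ha hb => ?_⟩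
  have hdiff : HasAE M 0 (a - b) := sub_self f ▸ ha.sub hb
  exact sub_eq_zero.1 hdiff.eq_zero_of_zero

/-- Uniqueness of asymptotic expansions: if the zero germ has asymptotic expansion
`F ∈ ℝ[[M]]`, then `F = 0`; consequently every germ has at most one asymptotic
expansion in `ℝ[[M]]`. -/
theorem stmt16 (M : Set (ℝ → ℝ)) (hM : AsymScale M) :
    (∀ a : (ℝ → ℝ) → ℝ, HasAE M (fun _ => 0) a → a = 0) ∧
    (∀ (f : ℝ → ℝ) (a b : (ℝ → ℝ) → ℝ), HasAE M f a → HasAE M f b → a = b) :=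
  stmt16_general M
end
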